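/- arXiv:2111.09393 — 6 statements merged into one kernel-verified Lean document; each statement's English description precedes it below -/
import Mathlib

section
/- Let K_1, K_2 ⊂ ℝ be linked Cantor sets (i.e., the interiors of their convex hulls intersect but neither convex hull's interior is contained in the other's) satisfying τ(K_1)·τ(K_2) ≥ 1, where τ denotes Newhouse thickness. Then K_1 ∩ K_2 ≠ ∅. -/
open Set

/-- A Cantor set: a non-empty compact, perfect, totally disconnected subset of ℝ. -/
def IsCantorSet (K : Set ℝ) : Prop :=
  K.Nonempty ∧ IsCompact K ∧ Perfect K ∧ IsTotallyDisconnected K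

/-- `(a,b)` is a bounded gap of `K`: a bounded connected component of the complement. -/
def IsGap (K : Set ℝ) (a b : ℝ) : Prop :=
  a < b ∧ a ∈ K ∧ b ∈ K ∧ Set.Ioo a b ∩ K = ∅

/-- Left endpoints of gaps to the right of `u` of length at least `ℓ` (or the right extreme of `K`). -/
def rightTargets (K : Set ℝ) (u ℓ : ℝ) : Set ℝ :=
  {a | u < a ∧ ((∃ b, IsGap K a b ∧ ℓ ≤ b - a) ∨ a = sSup K)}

/-- Right endpoints of gaps to the left of `u` of length at least `ℓ` (or the left extreme of `K`). -/
def leftTargets (K : Set ℝ) (u ℓ : ℝ) : Set ℝ :=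
  {b | b < u ∧ ((∃ a, IsGap K a b ∧ ℓ ≤ b - a) ∨ b = sInf K)}

/-- The set of bridge/gap ratios of `K` at endpoints of bounded gaps. -/
def thicknessValues (K : Set ℝ) : Set ℝ :=
  {r | ∃ a b, IsGap K a b ∧
    (r = (sInf (rightTargets K b (b - a)) - b) / (b - a) ∨
     r = (a - sSup (leftTargets K a (b - a))) / (b - a))}

/-- Newhouse thickness of `K`. -/
noncomputable def thickness (K : Set ℝ) : ℝ := sInf (thicknessValues K)

def rightTargetsEps (K : Set ℝ) (ε u ℓ : ℝ) : Set ℝ :=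
  {a | u < a ∧ ((∃ b, IsGap K a b ∧ (1 - ε) * ℓ < b - a) ∨ a = sSup K)}

def leftTargetsEps (K : Set ℝ) (ε u ℓ : ℝ) : Set ℝ :=
  {b | b < u ∧ ((∃ a, IsGap K a b ∧ (1 - ε) * ℓ < b - a) ∨ b = sInf K)}

def epsThicknessValues (K : Set ℝ) (ε : ℝ) : Set ℝ :=
  {r | ∃ a b, IsGap K a b ∧
    (r = (sInf (rightTargetsEps K ε b (b - a)) - b) / (b - a) ∨
     r = (a - sSup (leftTargetsEps K ε a (b - a))) / (b - a))}

/-- The `ε`-thickness of `K`. -/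
noncomputable def epsThickness (K : Set ℝ) (ε : ℝ) : ℝ := sInf (epsThicknessValues K ε)

/-- Two bounded subsets of ℝ are linked if the interiors of their convex hulls intersect
but neither is contained in the other. -/
def Linked (K1 K2 : Set ℝ) : Prop :=
  (Set.Ioo (sInf K1) (sSup K1) ∩ Set.Ioo (sInf K2) (sSup K2)).Nonempty ∧
  ¬ Set.Ioo (sInf K1) (sSup K1) ⊆ Set.Ioo (sInf K2) (sSup K2) ∧
  ¬ Set.Ioo (sInf K2) (sSup K2) ⊆ Set.Ioo (sInf K1) (sSup K1)

/-- The standard middle-thirds Cantor set. -/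
noncomputable def cantorThirds : Set ℝ :=
  ⋂ n : ℕ,
    (fun S : Set ℝ => (fun x : ℝ => x / 3) '' S ∪ (fun x : ℝ => x / 3 + 2/3) '' S)^[n]
      (Set.Icc 0 1)

/-- A section of the middle-thirds Cantor set: a scaled translated copy of it sitting inside it. -/
def IsCantorSection (S : Set ℝ) : Prop :=
  ∃ (n : ℕ) (a : ℝ), S = (fun x : ℝ => a + x / 3 ^ n) '' cantorThirds ∧ S ⊆ cantorThirds

/-- The open wedge at `x`. -/
def Wedge (x : ℝ × ℝ) : Set (ℝ × ℝ) :=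
  {y | y.2 - x.2 < y.1 - x.1 ∧ y.1 - x.1 < 3 * (y.2 - x.2)}

/-! Suppose `X` and `Y` are disjoint and `(x₁, x₂)`, `(y₁, y₂)` are linked gaps of `X` and `Y`
with `x₁ < y₁ < x₂ < y₂`. If the bridge of `X` at `x₂` reached past `y₂` and the bridge of `Y`
at `y₁` reached past `x₁`, the thickness bounds would give `τ(X) |x₂ - x₁| < |y₂ - y₁|` and
`τ(Y) |y₂ - y₁| < |x₂ - x₁|`, contradicting `τ(X) τ(Y) ≥ 1`. So one of the points `y₂ ∉ X`,
`x₁ ∉ Y` lies in a gap strictly shorter than the gap it faces, and this new gap is again linked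
with the other old one. Disjointness of the compact sets keeps all linked gaps longer than
`dist(X, Y) > 0`, so there are only finitely many linked pairs, and one of minimal total length
contradicts this shortening step. -/

section Gaps

variable {K : Set ℝ} {a b c : ℝ}

lemma IsGap.right_le_left_of_lt {a' b' : ℝ} (h : IsGap K a b) (h' : IsGap K a' b')
    (ha : a < a') : b ≤ a' :=
  not_lt.1 fun hb => (eq_empty_iff_forall_notMem.1 h.2.2.2) a' ⟨⟨ha, hb⟩, h'.2.1⟩

lemma IsGap.right_unique {b' : ℝ} (h : IsGap K a b) (h' : IsGap K a b') : b = b' := by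
  by_contra hne
  rcases lt_or_gt_of_ne hne with hb | hb
  · exact (eq_empty_iff_forall_notMem.1 h'.2.2.2) b ⟨⟨h.1, hb⟩, h.2.2.1⟩
  · exact (eq_empty_iff_forall_notMem.1 h.2.2.2) b' ⟨⟨h'.1, hb⟩, h'.2.2.1⟩

lemma IsGap.exists_mem_Ioo_right (hK : Perfect K) (h : IsGap K a b) (hc : b < c) :
    ∃ y ∈ K, b < y ∧ y < c := by
  obtain ⟨y, ⟨⟨hay, hyc⟩, hyK⟩, hyb⟩ :=
    accPt_iff_nhds.1 (hK.acc b h.2.2.1) _ (Ioo_mem_nhds h.1 hc)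
  refine ⟨y, hyK, lt_of_le_of_ne (not_lt.1 fun hyb' => ?_) (Ne.symm hyb), hyc⟩
  exact (eq_empty_iff_forall_notMem.1 h.2.2.2) y ⟨⟨hay, hyb'⟩, hyK⟩

lemma IsGap.exists_mem_Ioo_left (hK : Perfect K) (h : IsGap K a b) (hc : c < a) :
    ∃ y ∈ K, c < y ∧ y < a := by
  obtain ⟨y, ⟨⟨hcy, hyb⟩, hyK⟩, hya⟩ :=
    accPt_iff_nhds.1 (hK.acc a h.2.1) _ (Ioo_mem_nhds hc h.1)
  refine ⟨y, hyK, hcy, lt_of_le_of_ne (not_lt.1 fun hay => ?_) hya⟩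
  exact (eq_empty_iff_forall_notMem.1 h.2.2.2) y ⟨⟨hay, hyb⟩, hyK⟩

lemma IsGap.not_isGap_right (hK : Perfect K) (h : IsGap K a b) : ¬ IsGap K b c := fun h' => by
  obtain ⟨y, hyK, hby, hyc⟩ := h.exists_mem_Ioo_right hK h'.1
  exact (eq_empty_iff_forall_notMem.1 h'.2.2.2) y ⟨⟨hby, hyc⟩, hyK⟩

lemma IsGap.lt_sSup (hK : IsCantorSet K) (h : IsGap K a b) : b < sSup K := by
  obtain ⟨y, hyK, hby, -⟩ := h.exists_mem_Ioo_right hK.2.2.1 (lt_add_one b)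
  exact hby.trans_le (le_csSup hK.2.1.bddAbove hyK)

lemma IsGap.sInf_lt (hK : IsCantorSet K) (h : IsGap K a b) : sInf K < a := by
  obtain ⟨y, hyK, -, hya⟩ := h.exists_mem_Ioo_left hK.2.2.1 (sub_one_lt a)
  exact (csInf_le hK.2.1.bddBelow hyK).trans_lt hya

lemma exists_isGap_of_notMem (hK : IsCantorSet K) {x : ℝ} (hx : x ∉ K) (h₁ : sInf K < x)
    (h₂ : x < sSup K) : ∃ a b, IsGap K a b ∧ a < x ∧ x < b := by
  obtain ⟨hne, hc, -, -⟩ := hK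
  have hcl : IsCompact (K ∩ Iic x) := hc.inter_right isClosed_Iic
  have hcr : IsCompact (K ∩ Ici x) := hc.inter_right isClosed_Ici
  have hal := hcl.sSup_mem ⟨sInf K, hc.sInf_mem hne, h₁.le⟩
  have hbr := hcr.sInf_mem ⟨sSup K, hc.sSup_mem hne, h₂.le⟩
  have hax : sSup (K ∩ Iic x) < x := lt_of_le_of_ne hal.2 fun h => hx (h ▸ hal.1)
  have hxb : x < sInf (K ∩ Ici x) := lt_of_le_of_ne hbr.2 fun h => hx (h ▸ hbr.1)
  refine ⟨_, _, ⟨hax.trans hxb, hal.1, hbr.1, eq_empty_iff_forall_notMem.2 ?_⟩, hax, hxb⟩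
  rintro y ⟨⟨hay, hyb⟩, hyK⟩
  rcases le_or_gt y x with hyx | hxy
  · exact (le_csSup hcl.bddAbove ⟨hyK, hyx⟩).not_gt hay
  · exact (csInf_le hcr.bddBelow ⟨hyK, hxy.le⟩).not_gt hyb

lemma IsGap.floor_div_lt {a' b' δ : ℝ} (h : IsGap K a b) (h' : IsGap K a' b') (hδ : 0 < δ)
    (hlen : δ ≤ b - a) (ha : a < a') : ⌊a / δ⌋ < ⌊a' / δ⌋ := by
  have hsep : a / δ + 1 ≤ a' / δ := by
    rw [div_add_one hδ.ne', div_le_div_iff_of_pos_right hδ]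
    linarith [h.right_le_left_of_lt h' ha]
  calc ⌊a / δ⌋ < ⌊a / δ + 1⌋ := by rw [Int.floor_add_one]; omega
    _ ≤ ⌊a' / δ⌋ := Int.floor_mono hsep

/-- Gaps of length at least `δ` have left endpoints `δ` apart, so `⌊a / δ⌋` tells them apart. -/
lemma finite_setOf_isGap_le_sub (hK : IsCompact K) {δ : ℝ} (hδ : 0 < δ) :
    {g : ℝ × ℝ | IsGap K g.1 g.2 ∧ δ ≤ g.2 - g.1}.Finite := by
  refine Finite.of_finite_image (f := fun g => ⌊g.1 / δ⌋)
    ((finite_Icc ⌊sInf K / δ⌋ ⌊sSup K / δ⌋).subset ?_) ?_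
  · rintro _ ⟨g, hg, rfl⟩
    exact ⟨Int.floor_mono (div_le_div_of_nonneg_right (csInf_le hK.bddBelow hg.1.2.1) hδ.le),
      Int.floor_mono (div_le_div_of_nonneg_right (le_csSup hK.bddAbove hg.1.2.1) hδ.le)⟩
  · rintro g ⟨hg, hlen⟩ g' ⟨hg', hlen'⟩ (heq : ⌊g.1 / δ⌋ = ⌊g'.1 / δ⌋)
    rcases lt_trichotomy g.1 g'.1 with h | h | h
    · exact absurd heq (hg.floor_div_lt hg' hδ hlen h).ne
    · exact Prod.ext h (hg.right_unique (h ▸ hg'))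
    · exact absurd heq (hg'.floor_div_lt hg hδ hlen' h).ne'

end Gaps

section Thickness

variable {K : Set ℝ} {a b : ℝ}

lemma thicknessValues_nonneg (hK : IsCantorSet K) : ∀ r ∈ thicknessValues K, 0 ≤ r := by
  rintro r ⟨a, b, hg, rfl | rfl⟩
  · have : b ≤ sInf (rightTargets K b (b - a)) :=
      le_csInf ⟨sSup K, hg.lt_sSup hK, Or.inr rfl⟩ fun _ hx => hx.1.le
    exact div_nonneg (by linarith) (by linarith [hg.1])
  · have : sSup (leftTargets K a (b - a)) ≤ a :=
      csSup_le ⟨sInf K, hg.sInf_lt hK, Or.inr rfl⟩ fun _ hx => hx.1.le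
    exact div_nonneg (by linarith) (by linarith [hg.1])

lemma thickness_nonneg (hK : IsCantorSet K) : 0 ≤ thickness K :=
  Real.sInf_nonneg (thicknessValues_nonneg hK)

lemma thickness_le_of_mem (hK : IsCantorSet K) {r : ℝ} (hr : r ∈ thicknessValues K) :
    thickness K ≤ r :=
  csInf_le ⟨0, thicknessValues_nonneg hK⟩ hr

lemma thickness_mul_le_rightBridge (hK : IsCantorSet K) (hg : IsGap K a b) :
    thickness K * (b - a) ≤ sInf (rightTargets K b (b - a)) - b :=
  (le_div_iff₀ (sub_pos.2 hg.1)).1 (thickness_le_of_mem hK ⟨a, b, hg, Or.inl rfl⟩)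

lemma thickness_mul_le_leftBridge (hK : IsCantorSet K) (hg : IsGap K a b) :
    thickness K * (b - a) ≤ a - sSup (leftTargets K a (b - a)) :=
  (le_div_iff₀ (sub_pos.2 hg.1)).1 (thickness_le_of_mem hK ⟨a, b, hg, Or.inr rfl⟩)

/-- A gap at least as long as `(a, b)` would end the bridge before `z`. -/
lemma exists_shorter_isGap_of_le_rightBridge (hK : IsCantorSet K) (hg : IsGap K a b) {z : ℝ}
    (hz : z ∉ K) (hbz : b < z) (hzc : z ≤ sInf (rightTargets K b (b - a))) :
    ∃ a' b', IsGap K a' b' ∧ b < a' ∧ a' < z ∧ z < b' ∧ b' - a' < b - a := by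
  have hbdd : BddBelow (rightTargets K b (b - a)) := ⟨b, fun _ hx => hx.1.le⟩
  have hzs : z < sSup K := lt_of_le_of_ne
    (hzc.trans (csInf_le hbdd ⟨hg.lt_sSup hK, Or.inr rfl⟩)) fun h => hz (h ▸ hK.2.1.sSup_mem hK.1)
  have hiz : sInf K < z := (csInf_le hK.2.1.bddBelow hg.2.2.1).trans_lt hbz
  obtain ⟨a', b', hg', ha', hb'⟩ := exists_isGap_of_notMem hK hz hiz hzs
  have hba' : b < a' := by
    rcases lt_trichotomy b a' with h | rfl | h
    · exact h
    · exact absurd hg' (hg.not_isGap_right hK.2.2.1)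
    · exact absurd ⟨⟨h, hbz.trans hb'⟩, hg.2.2.1⟩ (eq_empty_iff_forall_notMem.1 hg'.2.2.2 b)
  refine ⟨a', b', hg', hba', ha', hb', not_le.1 fun hlong => ?_⟩
  linarith [csInf_le hbdd ⟨hba', Or.inl ⟨b', hg', hlong⟩⟩]

lemma exists_shorter_isGap_of_leftBridge_le (hK : IsCantorSet K) (hg : IsGap K a b) {z : ℝ}
    (hz : z ∉ K) (hza : z < a) (hcz : sSup (leftTargets K a (b - a)) ≤ z) :
    ∃ a' b', IsGap K a' b' ∧ a' < z ∧ z < b' ∧ b' < a ∧ b' - a' < b - a := by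
  have hbdd : BddAbove (leftTargets K a (b - a)) := ⟨a, fun _ hx => hx.1.le⟩
  have hiz : sInf K < z := lt_of_le_of_ne
    ((le_csSup hbdd ⟨hg.sInf_lt hK, Or.inr rfl⟩).trans hcz) fun h => hz (h ▸ hK.2.1.sInf_mem hK.1)
  have hzs : z < sSup K := hza.trans_le (le_csSup hK.2.1.bddAbove hg.2.1)
  obtain ⟨a', b', hg', ha', hb'⟩ := exists_isGap_of_notMem hK hz hiz hzs
  have hb'a : b' < a := by
    rcases lt_trichotomy b' a with h | rfl | h
    · exact h
    · exact absurd hg (hg'.not_isGap_right hK.2.2.1)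
    · exact absurd ⟨⟨ha'.trans hza, h⟩, hg.2.1⟩ (eq_empty_iff_forall_notMem.1 hg'.2.2.2 a)
  refine ⟨a', b', hg', ha', hb', hb'a, not_le.1 fun hlong => ?_⟩
  linarith [le_csSup hbdd ⟨hb'a, Or.inl ⟨a', hg', hlong⟩⟩]

end Thickness

def GapsLinked (X Y : Set ℝ) (p q : ℝ × ℝ) : Prop :=
  IsGap X p.1 p.2 ∧ IsGap Y q.1 q.2 ∧ p.1 < q.1 ∧ q.1 < p.2 ∧ p.2 < q.2

namespace GapsLinked

variable {X Y : Set ℝ} {p q : ℝ × ℝ}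

lemma le_sub_of_le_dist {δ : ℝ} (h : GapsLinked X Y p q) (hδ : ∀ x ∈ X, ∀ y ∈ Y, δ ≤ dist x y) :
    δ ≤ p.2 - p.1 ∧ δ ≤ q.2 - q.1 := by
  have := hδ _ h.1.2.2.1 _ h.2.1.2.1
  rw [Real.dist_eq, abs_of_pos (by linarith [h.2.2.2.1])] at this
  exact ⟨by linarith [h.2.2.1], by linarith [h.2.2.2.2]⟩

lemma exists_shorter (hX : IsCantorSet X) (hY : IsCantorSet Y)
    (hτ : 1 ≤ thickness X * thickness Y) (hXY : Disjoint X Y) (h : GapsLinked X Y p q) :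
    ∃ r s, GapsLinked Y X r s ∧ (r.2 - r.1) + (s.2 - s.1) < (p.2 - p.1) + (q.2 - q.1) := by
  obtain ⟨hp, hq, h₁, h₂, h₃⟩ := h
  by_cases hc : q.2 ≤ sInf (rightTargets X p.2 (p.2 - p.1))
  · obtain ⟨a, b, hg, ha, haz, hzb, hlt⟩ := exists_shorter_isGap_of_le_rightBridge hX hp
      (hXY.notMem_of_mem_right hq.2.2.1) h₃ hc
    exact ⟨q, (a, b), ⟨hq, hg, h₂.trans ha, haz, hzb⟩, by dsimp only; linarith⟩
  by_cases hd : sSup (leftTargets Y q.1 (q.2 - q.1)) ≤ p.1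
  · obtain ⟨e, f, hg, hez, hzf, hf, hlt⟩ := exists_shorter_isGap_of_leftBridge_le hY hq
      (hXY.notMem_of_mem_left hp.2.1) h₁ hd
    exact ⟨(e, f), p, ⟨hg, hp, hez, hzf, hf.trans h₂⟩, by dsimp only; linarith⟩
  exfalso
  have hτX := thickness_nonneg hX
  have hτY := thickness_nonneg hY
  have hlp : 0 < p.2 - p.1 := sub_pos.2 hp.1
  have hlq : 0 < q.2 - q.1 := sub_pos.2 hq.1
  have hbX : thickness X * (p.2 - p.1) < q.2 - q.1 := by
    linarith [thickness_mul_le_rightBridge hX hp]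
  have hbY : thickness Y * (q.2 - q.1) < p.2 - p.1 := by
    linarith [thickness_mul_le_leftBridge hY hq]
  have := mul_lt_mul'' hbX hbY (by positivity) (by positivity)
  nlinarith

end GapsLinked

lemma exists_pos_le_dist_of_disjoint {α : Type*} [PseudoMetricSpace α] {X Y : Set α}
    (hX : IsCompact X) (hY : IsClosed Y) (hXY : Disjoint X Y) :
    ∃ δ > 0, ∀ x ∈ X, ∀ y ∈ Y, δ ≤ dist x y := by
  obtain ⟨δ, hδ, hsep⟩ := Metric.exists_pos_forall_lt_edist hX hY hXY
  refine ⟨δ, hδ, fun x hx y hy => ?_⟩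
  have := hsep x hx y hy
  rw [edist_nndist, ENNReal.coe_lt_coe, ← NNReal.coe_lt_coe, coe_nndist] at this
  exact this.le

lemma finite_setOf_gapsLinked {X Y : Set ℝ} (hX : IsCompact X) (hY : IsCompact Y) {δ : ℝ}
    (hδ : 0 < δ) (hsep : ∀ x ∈ X, ∀ y ∈ Y, δ ≤ dist x y) :
    {g : (ℝ × ℝ) × (ℝ × ℝ) | GapsLinked X Y g.1 g.2}.Finite :=
  ((finite_setOf_isGap_le_sub hX hδ).prod (finite_setOf_isGap_le_sub hY hδ)).subset
    fun _ hg => ⟨⟨hg.1, (hg.le_sub_of_le_dist hsep).1⟩, hg.2.1, (hg.le_sub_of_le_dist hsep).2⟩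

lemma nonempty_inter_of_gapsLinked {X Y : Set ℝ} (hX : IsCantorSet X) (hY : IsCantorSet Y)
    (hτ : 1 ≤ thickness X * thickness Y) {p q : ℝ × ℝ} (h : GapsLinked X Y p q) :
    (X ∩ Y).Nonempty := by
  by_contra hne
  have hXY : Disjoint X Y := disjoint_iff_inter_eq_empty.2 (not_nonempty_iff_eq_empty.1 hne)
  obtain ⟨δ, hδ, hsep⟩ := exists_pos_le_dist_of_disjoint hX.2.1 hY.2.1.isClosed hXY
  set S := {g : (ℝ × ℝ) × (ℝ × ℝ) | GapsLinked X Y g.1 g.2 ∨ GapsLinked Y X g.1 g.2}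
  have hS : S.Finite := (finite_setOf_gapsLinked hX.2.1 hY.2.1 hδ hsep).union
    (finite_setOf_gapsLinked hY.2.1 hX.2.1 hδ fun y hy x hx => dist_comm x y ▸ hsep x hx y hy)
  obtain ⟨g, hg, hmin⟩ := exists_min_image S (fun g => (g.1.2 - g.1.1) + (g.2.2 - g.2.1)) hS
    ⟨(p, q), Or.inl h⟩
  obtain ⟨r, s, hrs, hlt⟩ : ∃ r s, (GapsLinked Y X r s ∨ GapsLinked X Y r s) ∧
      (r.2 - r.1) + (s.2 - s.1) < (g.1.2 - g.1.1) + (g.2.2 - g.2.1) := by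
    rcases hg with hg | hg
    · obtain ⟨r, s, hrs, hlt⟩ := hg.exists_shorter hX hY hτ hXY
      exact ⟨r, s, Or.inl hrs, hlt⟩
    · obtain ⟨r, s, hrs, hlt⟩ := hg.exists_shorter hY hX (by rwa [mul_comm]) hXY.symm
      exact ⟨r, s, Or.inr hrs, hlt⟩
  exact (hmin (r, s) hrs.symm).not_gt hlt

lemma Linked.interleaved {K₁ K₂ : Set ℝ} (h : Linked K₁ K₂) :
    (sInf K₁ < sInf K₂ ∧ sInf K₂ < sSup K₁ ∧ sSup K₁ < sSup K₂) ∨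
      (sInf K₂ < sInf K₁ ∧ sInf K₁ < sSup K₂ ∧ sSup K₂ < sSup K₁) := by
  obtain ⟨⟨t, ⟨h₁, h₂⟩, h₃, h₄⟩, hn₁, hn₂⟩ := h
  rw [Ioo_subset_Ioo_iff (h₁.trans h₂)] at hn₁
  rw [Ioo_subset_Ioo_iff (h₃.trans h₄)] at hn₂
  push Not at hn₁ hn₂
  rcases lt_trichotomy (sInf K₁) (sInf K₂) with h | h | h
  · exact Or.inl ⟨h, h₃.trans h₂, hn₂ h.le⟩
  · linarith [hn₁ h.ge, hn₂ h.le]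
  · exact Or.inr ⟨h, h₁.trans h₄, hn₁ h.le⟩

lemma exists_gapsLinked {X Y : Set ℝ} (hX : IsCantorSet X) (hY : IsCantorSet Y)
    (hXY : Disjoint X Y) (h₁ : sInf X < sInf Y) (h₂ : sInf Y < sSup X) (h₃ : sSup X < sSup Y) :
    ∃ p q, GapsLinked X Y p q := by
  have hiY : sInf Y ∈ Y := hY.2.1.sInf_mem hY.1
  obtain ⟨a, b, hab, ha, hb⟩ :=
    exists_isGap_of_notMem hX (hXY.notMem_of_mem_right hiY) h₁ h₂
  obtain ⟨c, d, hcd, hc, hd⟩ := exists_isGap_of_notMem hY (hXY.notMem_of_mem_left hab.2.2.1) hb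
    ((le_csSup hX.2.1.bddAbove hab.2.2.1).trans_lt h₃)
  exact ⟨(a, b), (c, d), hab, hcd, ha.trans_le (csInf_le hY.2.1.bddBelow hcd.2.1), hc, hd⟩

/-- the Newhouse gap lemma for linked Cantor sets. -/
theorem newhouse_gap_lemma (K1 K2 : Set ℝ) (h1 : IsCantorSet K1) (h2 : IsCantorSet K2)
    (hlink : Linked K1 K2) (hτ : 1 ≤ thickness K1 * thickness K2) :
    (K1 ∩ K2).Nonempty := by
  by_contra hne
  have hdisj : Disjoint K1 K2 := disjoint_iff_inter_eq_empty.2 (not_nonempty_iff_eq_empty.1 hne)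
  rcases hlink.interleaved with ⟨hi, hm, hs⟩ | ⟨hi, hm, hs⟩
  · obtain ⟨p, q, h⟩ := exists_gapsLinked h1 h2 hdisj hi hm hs
    exact hne (nonempty_inter_of_gapsLinked h1 h2 hτ h)
  · obtain ⟨p, q, h⟩ := exists_gapsLinked h2 h1 hdisj.symm hi hm hs
    exact hne (inter_comm K1 K2 ▸ nonempty_inter_of_gapsLinked h2 h1 (by rwa [mul_comm]) h)
end

section
/- Let K ⊂ ℝ be a Cantor set. Then τ_ε(K) → τ(K) as ε → 0⁺, where τ_ε denotes ε-thickness and τ denotes ordinary Newhouse thickness. -/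
open Set

namespace EpsAux

variable {K : Set ℝ}

lemma sSup_mem (hK : IsCantorSet K) : sSup K ∈ K := hK.2.1.sSup_mem hK.1
lemma sInf_mem (hK : IsCantorSet K) : sInf K ∈ K := hK.2.1.sInf_mem hK.1

lemma gap_lt_sSup (hK : IsCantorSet K) {a b : ℝ} (h : IsGap K a b) : b < sSup K := by
  obtain ⟨hab, haK, hbK, hgap⟩ := h
  rcases lt_or_eq_of_le (le_csSup hK.2.1.bddAbove hbK) with h' | h'
  · exact h'
  · exfalso
    have hacc := hK.2.2.1.acc b hbK
    rw [accPt_iff_nhds] at hacc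
    obtain ⟨y, ⟨hy1, hy2⟩, hy3⟩ := hacc (Ioo a (b+1)) (Ioo_mem_nhds hab (lt_add_one b))
    have hyb : y ≤ b := h' ▸ le_csSup hK.2.1.bddAbove hy2
    have : y ∈ Ioo a b ∩ K := ⟨⟨hy1.1, lt_of_le_of_ne hyb hy3⟩, hy2⟩
    rw [hgap] at this
    exact this

lemma sInf_lt_gap (hK : IsCantorSet K) {a b : ℝ} (h : IsGap K a b) : sInf K < a := by
  obtain ⟨hab, haK, hbK, hgap⟩ := h
  rcases eq_or_lt_of_le (csInf_le hK.2.1.bddBelow haK) with h' | h'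
  · exfalso
    have hacc := hK.2.2.1.acc a haK
    rw [accPt_iff_nhds] at hacc
    obtain ⟨y, ⟨hy1, hy2⟩, hy3⟩ := hacc (Ioo (a-1) b) (Ioo_mem_nhds (by linarith) hab)
    have hya : a ≤ y := h' ▸ csInf_le hK.2.1.bddBelow hy2
    have : y ∈ Ioo a b ∩ K := ⟨⟨lt_of_le_of_ne hya (Ne.symm hy3), hy1.2⟩, hy2⟩
    rw [hgap] at this
    exact this
  · exact h'

lemma exists_gap (hK : IsCantorSet K) : ∃ a b, IsGap K a b := by
  obtain ⟨x, hx⟩ := hK.1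
  have hacc := hK.2.2.1.acc x hx
  rw [accPt_iff_nhds] at hacc
  obtain ⟨y, ⟨-, hyK⟩, hyx⟩ := hacc univ Filter.univ_mem
  obtain ⟨x, hx, y, hy, hxy⟩ : ∃ x ∈ K, ∃ y ∈ K, x < y := by
    rcases lt_or_gt_of_ne hyx with h | h
    exacts [⟨y, hyK, x, hx, h⟩, ⟨x, hx, y, hyK, h⟩]
  by_cases hsub : Icc x y ⊆ K
  · exact absurd ((hK.2.2.2 _ hsub isPreconnected_Icc)
      (left_mem_Icc.2 hxy.le) (right_mem_Icc.2 hxy.le)) hxy.ne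
  · rw [Set.not_subset] at hsub
    obtain ⟨z, hz, hzK⟩ := hsub
    have hAne : (K ∩ Iic z).Nonempty := ⟨x, hx, hz.1⟩
    have hBne : (K ∩ Ici z).Nonempty := ⟨y, hy, hz.2⟩
    have hAc : IsCompact (K ∩ Iic z) := hK.2.1.inter_right isClosed_Iic
    have hBc : IsCompact (K ∩ Ici z) := hK.2.1.inter_right isClosed_Ici
    have haA := hAc.sSup_mem hAne
    have hbB := hBc.sInf_mem hBne
    have h1 : sSup (K ∩ Iic z) < z := lt_of_le_of_ne haA.2 (fun h => hzK (h ▸ haA.1))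
    have h2 : z < sInf (K ∩ Ici z) := lt_of_le_of_ne' hbB.2 (fun h => hzK (h ▸ hbB.1))
    refine ⟨_, _, h1.trans h2, haA.1, hbB.1, ?_⟩
    ext w
    simp only [mem_inter_iff, mem_Ioo, mem_empty_iff_false, iff_false, not_and]
    rintro ⟨hw1, hw2⟩ hwK
    rcases le_or_gt w z with h | h
    · exact absurd (le_csSup hAc.bddAbove ⟨hwK, h⟩) (not_le.2 hw1)
    · exact absurd (csInf_le hBc.bddBelow ⟨hwK, h.le⟩) (not_le.2 hw2)

end EpsAux
namespace EpsAux

variable {K : Set ℝ}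

lemma bddBelow_rightTargets (u ℓ : ℝ) : BddBelow (rightTargets K u ℓ) :=
  ⟨u, fun _ hx => hx.1.le⟩

lemma bddBelow_rightTargetsEps (ε u ℓ : ℝ) : BddBelow (rightTargetsEps K ε u ℓ) :=
  ⟨u, fun _ hx => hx.1.le⟩

lemma bddAbove_leftTargets (u ℓ : ℝ) : BddAbove (leftTargets K u ℓ) :=
  ⟨u, fun _ hx => hx.1.le⟩

lemma bddAbove_leftTargetsEps (ε u ℓ : ℝ) : BddAbove (leftTargetsEps K ε u ℓ) :=
  ⟨u, fun _ hx => hx.1.le⟩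

lemma sSup_mem_rightTargets (hK : IsCantorSet K) {a b : ℝ} (h : IsGap K a b) (ℓ : ℝ) :
    sSup K ∈ rightTargets K b ℓ := ⟨gap_lt_sSup hK h, Or.inr rfl⟩

lemma sSup_mem_rightTargetsEps (hK : IsCantorSet K) {a b : ℝ} (h : IsGap K a b) (ε ℓ : ℝ) :
    sSup K ∈ rightTargetsEps K ε b ℓ := ⟨gap_lt_sSup hK h, Or.inr rfl⟩

lemma sInf_mem_leftTargets (hK : IsCantorSet K) {a b : ℝ} (h : IsGap K a b) (ℓ : ℝ) :
    sInf K ∈ leftTargets K a ℓ := ⟨sInf_lt_gap hK h, Or.inr rfl⟩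

lemma sInf_mem_leftTargetsEps (hK : IsCantorSet K) {a b : ℝ} (h : IsGap K a b) (ε ℓ : ℝ) :
    sInf K ∈ leftTargetsEps K ε a ℓ := ⟨sInf_lt_gap hK h, Or.inr rfl⟩

lemma le_sInf_rightTargets (hK : IsCantorSet K) {a b : ℝ} (h : IsGap K a b) (ℓ : ℝ) :
    b ≤ sInf (rightTargets K b ℓ) :=
  le_csInf ⟨_, sSup_mem_rightTargets hK h ℓ⟩ (fun _ hx => hx.1.le)

lemma le_sInf_rightTargetsEps (hK : IsCantorSet K) {a b : ℝ} (h : IsGap K a b) (ε ℓ : ℝ) :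
    b ≤ sInf (rightTargetsEps K ε b ℓ) :=
  le_csInf ⟨_, sSup_mem_rightTargetsEps hK h ε ℓ⟩ (fun _ hx => hx.1.le)

lemma sSup_leftTargets_le (hK : IsCantorSet K) {a b : ℝ} (h : IsGap K a b) (ℓ : ℝ) :
    sSup (leftTargets K a ℓ) ≤ a :=
  csSup_le ⟨_, sInf_mem_leftTargets hK h ℓ⟩ (fun _ hx => hx.1.le)

lemma sSup_leftTargetsEps_le (hK : IsCantorSet K) {a b : ℝ} (h : IsGap K a b) (ε ℓ : ℝ) :
    sSup (leftTargetsEps K ε a ℓ) ≤ a :=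
  csSup_le ⟨_, sInf_mem_leftTargetsEps hK h ε ℓ⟩ (fun _ hx => hx.1.le)

lemma thicknessValues_nonneg (hK : IsCantorSet K) {r : ℝ} (hr : r ∈ thicknessValues K) :
    0 ≤ r := by
  obtain ⟨a, b, h, hr | hr⟩ := hr
  · exact hr ▸ div_nonneg (by linarith [le_sInf_rightTargets hK h (b - a)]) (by linarith [h.1])
  · exact hr ▸ div_nonneg (by linarith [sSup_leftTargets_le hK h (b - a)]) (by linarith [h.1])

lemma epsThicknessValues_nonneg (hK : IsCantorSet K) {ε r : ℝ}
    (hr : r ∈ epsThicknessValues K ε) : 0 ≤ r := by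
  obtain ⟨a, b, h, hr | hr⟩ := hr
  · exact hr ▸ div_nonneg (by linarith [le_sInf_rightTargetsEps hK h ε (b - a)]) (by linarith [h.1])
  · exact hr ▸ div_nonneg (by linarith [sSup_leftTargetsEps_le hK h ε (b - a)]) (by linarith [h.1])

lemma thickness_nonneg (hK : IsCantorSet K) : 0 ≤ thickness K :=
  Real.sInf_nonneg (fun _ hx => thicknessValues_nonneg hK hx)

lemma thicknessValues_nonempty (hK : IsCantorSet K) : (thicknessValues K).Nonempty := by
  obtain ⟨a, b, h⟩ := exists_gap hK
  exact ⟨_, a, b, h, Or.inl rfl⟩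

lemma epsThicknessValues_nonempty (hK : IsCantorSet K) (ε : ℝ) :
    (epsThicknessValues K ε).Nonempty := by
  obtain ⟨a, b, h⟩ := exists_gap hK
  exact ⟨_, a, b, h, Or.inl rfl⟩

/-- `thickness` is a lower bound for every bridge-to-gap ratio. -/
lemma thickness_le_right (hK : IsCantorSet K) {a b : ℝ} (h : IsGap K a b) :
    thickness K * (b - a) ≤ sInf (rightTargets K b (b - a)) - b := by
  have ht : thickness K ≤ (sInf (rightTargets K b (b - a)) - b) / (b - a) :=
    csInf_le ⟨0, fun _ hx => thicknessValues_nonneg hK hx⟩ ⟨a, b, h, Or.inl rfl⟩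
  have hab : (0:ℝ) < b - a := by linarith [h.1]
  calc thickness K * (b - a) ≤ ((sInf (rightTargets K b (b - a)) - b) / (b - a)) * (b - a) := by
        exact mul_le_mul_of_nonneg_right ht hab.le
    _ = sInf (rightTargets K b (b - a)) - b := div_mul_cancel₀ _ hab.ne'

lemma thickness_le_left (hK : IsCantorSet K) {a b : ℝ} (h : IsGap K a b) :
    thickness K * (b - a) ≤ a - sSup (leftTargets K a (b - a)) := by
  have ht : thickness K ≤ (a - sSup (leftTargets K a (b - a))) / (b - a) :=
    csInf_le ⟨0, fun _ hx => thicknessValues_nonneg hK hx⟩ ⟨a, b, h, Or.inr rfl⟩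
  have hab : (0:ℝ) < b - a := by linarith [h.1]
  calc thickness K * (b - a) ≤ ((a - sSup (leftTargets K a (b - a))) / (b - a)) * (b - a) := by
        exact mul_le_mul_of_nonneg_right ht hab.le
    _ = a - sSup (leftTargets K a (b - a)) := div_mul_cancel₀ _ hab.ne'

end EpsAux
namespace EpsAux

variable {K : Set ℝ}

/-- Any ε-target to the right of gap `(a,b)` is at distance at least `(1-ε)·τ·(b-a)` from `b`. -/
lemma right_lb (hK : IsCantorSet K) {a b ε : ℝ} (hε : 0 ≤ ε) (h : IsGap K a b)
    {x : ℝ} (hx : x ∈ rightTargetsEps K ε b (b - a)) :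
    (1 - ε) * thickness K * (b - a) ≤ x - b := by
  set t := thickness K with htdef
  have ht0 : 0 ≤ t := thickness_nonneg hK
  have hab : (0:ℝ) < b - a := by linarith [h.1]
  obtain ⟨hbx, hx2⟩ := hx
  -- first useful fact: the ordinary right bridge gives x - b ≥ t * (b - a)
  have hbridge : t * (b - a) ≤ sInf (rightTargets K b (b - a)) - b := thickness_le_right hK h
  rcases hx2 with ⟨b', hgap', hlen'⟩ | hxsup
  · have hxb' : x < b' := hgap'.1
    rcases le_or_gt (b - a) (b' - x) with hge | hlt
    · -- x is an ordinary target
      have hxmem : x ∈ rightTargets K b (b - a) := ⟨hbx, Or.inl ⟨b', hgap', hge⟩⟩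
      have := csInf_le (bddBelow_rightTargets b (b - a)) hxmem
      nlinarith [mul_nonneg (mul_nonneg hε ht0) hab.le]
    · -- the gap (x, b') is shorter than (a,b); use the left bridge of (x,b')
      have hbmem : b ∈ leftTargets K x (b' - x) := ⟨hbx, Or.inl ⟨a, h, by linarith⟩⟩
      have hs : b ≤ sSup (leftTargets K x (b' - x)) :=
        le_csSup (bddAbove_leftTargets x (b' - x)) hbmem
      have hbridge' : t * (b' - x) ≤ x - sSup (leftTargets K x (b' - x)) :=
        thickness_le_left hK hgap'
      nlinarith
  · -- x = sSup K is an ordinary target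
    have hxmem : x ∈ rightTargets K b (b - a) := ⟨hbx, Or.inr hxsup⟩
    have := csInf_le (bddBelow_rightTargets b (b - a)) hxmem
    nlinarith [mul_nonneg (mul_nonneg hε ht0) hab.le]

lemma left_lb (hK : IsCantorSet K) {a b ε : ℝ} (hε : 0 ≤ ε) (h : IsGap K a b)
    {y : ℝ} (hy : y ∈ leftTargetsEps K ε a (b - a)) :
    (1 - ε) * thickness K * (b - a) ≤ a - y := by
  set t := thickness K with htdef
  have ht0 : 0 ≤ t := thickness_nonneg hK
  have hab : (0:ℝ) < b - a := by linarith [h.1]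
  obtain ⟨hya, hy2⟩ := hy
  have hbridge : t * (b - a) ≤ a - sSup (leftTargets K a (b - a)) := thickness_le_left hK h
  rcases hy2 with ⟨a', hgap', hlen'⟩ | hyinf
  · have hay' : a' < y := hgap'.1
    rcases le_or_gt (b - a) (y - a') with hge | hlt
    · have hymem : y ∈ leftTargets K a (b - a) := ⟨hya, Or.inl ⟨a', hgap', hge⟩⟩
      have := le_csSup (bddAbove_leftTargets a (b - a)) hymem
      nlinarith [mul_nonneg (mul_nonneg hε ht0) hab.le]
    · have hamem : a ∈ rightTargets K y (y - a') := ⟨hya, Or.inl ⟨b, h, by linarith⟩⟩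
      have hs : sInf (rightTargets K y (y - a')) ≤ a :=
        csInf_le (bddBelow_rightTargets y (y - a')) hamem
      have hbridge' : t * (y - a') ≤ sInf (rightTargets K y (y - a')) - y :=
        thickness_le_right hK hgap'
      nlinarith
  · have hymem : y ∈ leftTargets K a (b - a) := ⟨hya, Or.inr hyinf⟩
    have := le_csSup (bddAbove_leftTargets a (b - a)) hymem
    nlinarith [mul_nonneg (mul_nonneg hε ht0) hab.le]

/-- Lower bound: `(1-ε)·τ ≤ τ_ε`. -/
lemma lower (hK : IsCantorSet K) {ε : ℝ} (hε : 0 ≤ ε) :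
    (1 - ε) * thickness K ≤ epsThickness K ε := by
  refine le_csInf (epsThicknessValues_nonempty hK ε) ?_
  rintro r ⟨a, b, h, hr | hr⟩
  · have hab : (0:ℝ) < b - a := by linarith [h.1]
    have key : b + (1 - ε) * thickness K * (b - a) ≤ sInf (rightTargetsEps K ε b (b - a)) :=
      le_csInf ⟨_, sSup_mem_rightTargetsEps hK h ε (b - a)⟩
        (fun x hx => by linarith [right_lb hK hε h hx])
    rw [hr, le_div_iff₀ hab]
    linarith
  · have hab : (0:ℝ) < b - a := by linarith [h.1]
    have key : sSup (leftTargetsEps K ε a (b - a)) ≤ a - (1 - ε) * thickness K * (b - a) :=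
      csSup_le ⟨_, sInf_mem_leftTargetsEps hK h ε (b - a)⟩
        (fun y hy => by linarith [left_lb hK hε h hy])
    rw [hr, le_div_iff₀ hab]
    linarith

/-- Upper bound: `τ_ε ≤ τ` for `ε > 0`. -/
lemma upper (hK : IsCantorSet K) {ε : ℝ} (hε : 0 < ε) :
    epsThickness K ε ≤ thickness K := by
  refine le_csInf (thicknessValues_nonempty hK) ?_
  rintro r ⟨a, b, h, hr | hr⟩
  · have hab : (0:ℝ) < b - a := by linarith [h.1]
    have hsub : rightTargets K b (b - a) ⊆ rightTargetsEps K ε b (b - a) := by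
      rintro x ⟨hbx, ⟨b', hg, hl⟩ | hs⟩
      · exact ⟨hbx, Or.inl ⟨b', hg, by nlinarith⟩⟩
      · exact ⟨hbx, Or.inr hs⟩
    have hle : sInf (rightTargetsEps K ε b (b - a)) ≤ sInf (rightTargets K b (b - a)) :=
      csInf_le_csInf (bddBelow_rightTargetsEps ε b (b - a))
        ⟨_, sSup_mem_rightTargets hK h (b - a)⟩ hsub
    have hmem : (sInf (rightTargetsEps K ε b (b - a)) - b) / (b - a) ∈ epsThicknessValues K ε :=
      ⟨a, b, h, Or.inl rfl⟩
    refine le_trans (csInf_le ⟨0, fun _ hx => epsThicknessValues_nonneg hK hx⟩ hmem) ?_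
    rw [hr]
    exact div_le_div_of_nonneg_right (by linarith) hab.le
  · have hab : (0:ℝ) < b - a := by linarith [h.1]
    have hsub : leftTargets K a (b - a) ⊆ leftTargetsEps K ε a (b - a) := by
      rintro y ⟨hya, ⟨a', hg, hl⟩ | hs⟩
      · exact ⟨hya, Or.inl ⟨a', hg, by nlinarith⟩⟩
      · exact ⟨hya, Or.inr hs⟩
    have hle : sSup (leftTargets K a (b - a)) ≤ sSup (leftTargetsEps K ε a (b - a)) :=
      csSup_le_csSup (bddAbove_leftTargetsEps ε a (b - a))
        ⟨_, sInf_mem_leftTargets hK h (b - a)⟩ hsub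
    have hmem : (a - sSup (leftTargetsEps K ε a (b - a))) / (b - a) ∈ epsThicknessValues K ε :=
      ⟨a, b, h, Or.inr rfl⟩
    refine le_trans (csInf_le ⟨0, fun _ hx => epsThicknessValues_nonneg hK hx⟩ hmem) ?_
    rw [hr]
    exact div_le_div_of_nonneg_right (by linarith) hab.le

end EpsAux

/-- `ε`-thickness converges to ordinary thickness as `ε → 0⁺`. -/
theorem epsThickness_tendsto (K : Set ℝ) (hK : IsCantorSet K) :
    Filter.Tendsto (fun ε => epsThickness K ε) (nhdsWithin 0 (Set.Ioi 0))
      (nhds (thickness K)) := by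
  have hg : Filter.Tendsto (fun ε : ℝ => (1 - ε) * thickness K) (nhdsWithin 0 (Set.Ioi 0))
      (nhds (thickness K)) := by
    have h0 : Filter.Tendsto (fun ε : ℝ => (1 - ε) * thickness K) (nhds 0)
        (nhds ((1 - 0) * thickness K)) :=
      ((continuous_const.sub continuous_id).mul continuous_const).tendsto 0
    simpa using h0.mono_left nhdsWithin_le_nhds
  refine tendsto_of_tendsto_of_tendsto_of_le_of_le' hg tendsto_const_nhds ?_ ?_
  · exact eventually_nhdsWithin_of_forall (fun ε hε => EpsAux.lower hK (le_of_lt hε))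
  · exact eventually_nhdsWithin_of_forall (fun ε hε => EpsAux.upper hK hε)
end

section
/- Let K_1, K_2 be sections of the standard middle thirds Cantor set, and let g be a continuously differentiable monotone function with 1 < g' < 3 on the convex hull of K_1. If K_2 and g(K_1) are linked, then K_2 ∩ g(K_1) ≠ ∅. -/
open Set

/-!
Write `K1`, `K2` as copies of the Cantor set over triadic intervals `I`, `J`, and suppose that
`g '' K1` misses `K2` while `g(I)` and `J` are linked. Cut each of `I`, `J` into its two outer
thirds (the bridges) around the middle third (the gap). All the cutting points lie in `K1`, `K2`,
so none of their images under `g` is a cutting point of `J`, and some pair of pieces, at least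
one of them a bridge, is again linked, unless each interval has a bridge inside the gap of the
other. That is impossible: since `1 < g' < 3`, the three pieces of `g(I)` have lengths in
`(ℓ, 3ℓ)` with `ℓ = |I| / 3`, while those of `J` have one common length, and both `ℓ` and that
length are powers of `3`; so either both bridges of `g(I)` are at least as long as the gap of
`J`, or the other way round. Iterating gives linked pairs of arbitrarily short intervals, whose
endpoints are points of `g '' K1` and of `K2` at arbitrarily small distance, contradicting that
these compact sets are disjoint.
-/

namespace CantorGap

lemma exists_pos_lt_dist_of_disjoint {α : Type*} [PseudoMetricSpace α] {s t : Set α}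
    (hs : IsCompact s) (ht : IsClosed t) (hst : Disjoint s t) :
    ∃ δ > 0, ∀ x ∈ s, ∀ y ∈ t, δ < dist x y := by
  obtain ⟨r, hr, h⟩ := Metric.exists_pos_forall_lt_edist hs ht hst
  refine ⟨r, hr, fun x hx y hy => ?_⟩
  have := h x hx y hy
  rwa [edist_dist, ENNReal.coe_lt_ofReal] at this

def SlopesIn (g : ℝ → ℝ) (K : Set ℝ) (m M : ℝ) : Prop :=
  ∀ x ∈ K, ∀ y ∈ K, x < y → m * (y - x) < g y - g x ∧ g y - g x < M * (y - x)

lemma SlopesIn.mono {g : ℝ → ℝ} {K L : Set ℝ} {m M : ℝ} (h : SlopesIn g L m M)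
    (hKL : K ⊆ L) : SlopesIn g K m M :=
  fun x hx y hy => h x (hKL hx) y (hKL hy)

lemma SlopesIn.monotoneOn {g : ℝ → ℝ} {K : Set ℝ} {m M : ℝ} (h : SlopesIn g K m M)
    (hm : 0 ≤ m) : MonotoneOn g K := by
  intro x hx y hy hxy
  rcases hxy.lt_or_eq with hxy | rfl
  · have := (h x hx y hy hxy).1
    nlinarith
  · exact le_rfl

lemma _root_.Convex.slopesIn_of_lt_derivWithin_lt {D : Set ℝ} (hD : Convex ℝ D) {g : ℝ → ℝ}
    (hg : DifferentiableOn ℝ g D) {m M : ℝ}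
    (hg' : ∀ x ∈ interior D, m < derivWithin g D x ∧ derivWithin g D x < M) :
    SlopesIn g D m M := by
  have hderiv : ∀ x ∈ interior D, derivWithin g D x = deriv g x := fun x hx =>
    derivWithin_of_mem_nhds (mem_interior_iff_mem_nhds.1 hx)
  have hdiff := hg.mono interior_subset
  exact fun x hx y hy hxy =>
    ⟨hD.mul_sub_lt_image_sub_of_lt_deriv hg.continuousOn hdiff
        (fun z hz => hderiv z hz ▸ (hg' z hz).1) x hx y hy hxy,
      hD.image_sub_lt_mul_sub_of_deriv_lt hg.continuousOn hdiff
        (fun z hz => hderiv z hz ▸ (hg' z hz).2) x hx y hy hxy⟩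

lemma cantorThirds_eq_cantorSet : cantorThirds = cantorSet := by
  unfold cantorThirds cantorSet
  congr 1
  funext n
  induction n with
  | zero => rfl
  | succ n ih =>
    rw [Function.iterate_succ_apply', ih, preCantorSet_succ]
    congr 2
    funext x
    ring

lemma one_mem_cantorSet : (1 : ℝ) ∈ cantorSet :=
  mem_iInter.2 fun n => by
    induction n with
    | zero => simp
    | succ n ih => exact Or.inr ⟨1, ih, by norm_num⟩

lemma div_three_mem_cantorSet {x : ℝ} (hx : x ∈ cantorSet) : x / 3 ∈ cantorSet := by
  rw [cantorSet_eq_union_halves]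
  exact Or.inl ⟨x, hx, rfl⟩

lemma two_add_div_three_mem_cantorSet {x : ℝ} (hx : x ∈ cantorSet) :
    (2 + x) / 3 ∈ cantorSet := by
  rw [cantorSet_eq_union_halves]
  exact Or.inr ⟨x, hx, rfl⟩

def IooLinked (a b c d : ℝ) : Prop :=
  (a < c ∧ c < b ∧ b < d) ∨ (c < a ∧ a < d ∧ d < b)

lemma IooLinked.symm {a b c d : ℝ} (h : IooLinked a b c d) : IooLinked c d a b :=
  Or.symm h

lemma _root_.Linked.iooLinked {S T : Set ℝ} (h : Linked S T) :
    IooLinked (sInf S) (sSup S) (sInf T) (sSup T) := by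
  obtain ⟨⟨z, hzS, hzT⟩, hST, hTS⟩ := h
  rw [Ioo_subset_Ioo_iff (hzS.1.trans hzS.2), not_and_or, not_le, not_le] at hST
  rw [Ioo_subset_Ioo_iff (hzT.1.trans hzT.2), not_and_or, not_le, not_le] at hTS
  have hS_lt_T : sInf S < sSup T := hzS.1.trans hzT.2
  have hT_lt_S : sInf T < sSup S := hzT.1.trans hzS.2
  rcases hST with h | h <;> rcases hTS with h' | h'
  · exact absurd h (lt_asymm h')
  · exact Or.inl ⟨h, hT_lt_S, h'⟩
  · exact Or.inr ⟨h', hS_lt_T, h⟩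
  · exact absurd h (lt_asymm h')

lemma IooLinked.exists_endpoints_close {a b c d : ℝ} (h : IooLinked a b c d) :
    ∃ x ∈ ({a, b} : Set ℝ), ∃ y ∈ ({c, d} : Set ℝ), |x - y| < b - a ∧ |x - y| < d - c := by
  rcases h with ⟨h₀, h₁, h₂⟩ | ⟨h₀, h₁, h₂⟩
  · refine ⟨b, by simp, c, by simp, ?_⟩
    rw [abs_of_pos (sub_pos.2 h₁)]
    constructor <;> linarith
  · refine ⟨a, by simp, d, by simp, ?_⟩
    rw [abs_of_neg (sub_neg.2 h₁)]
    constructor <;> linarith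

/- A configuration `a : Fin 4 → ℝ` stands for the bridges `[a 0, a 1]` and `[a 2, a 3]` around
the gap `(a 1, a 2)`; a `Portion` picks the whole `[a 0, a 3]` or one of the bridges. -/
inductive Portion
  | whole
  | left
  | right

def Portion.lo : Portion → Fin 4
  | whole => 0
  | left => 0
  | right => 2

def Portion.hi : Portion → Fin 4
  | whole => 3
  | left => 1
  | right => 3

def BridgesDominateGap (a c : Fin 4 → ℝ) : Prop :=
  c 2 - c 1 ≤ a 1 - a 0 ∧ c 2 - c 1 ≤ a 3 - a 2

lemma bridgesDominateGap_or_of_steps {a c : Fin 4 → ℝ} {ℓ₁ ℓ₂ : ℝ}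
    (ha : ∀ i : Fin 3, ℓ₁ < a i.succ - a i.castSucc ∧ a i.succ - a i.castSucc < 3 * ℓ₁)
    (hc : ∀ i : Fin 3, c i.succ - c i.castSucc = ℓ₂) (hℓ : ℓ₂ ≤ ℓ₁ ∨ 3 * ℓ₁ ≤ ℓ₂) :
    BridgesDominateGap a c ∨ BridgesDominateGap c a := by
  have ha₀ : ℓ₁ < a 1 - a 0 ∧ a 1 - a 0 < 3 * ℓ₁ := ha 0
  have ha₁ : ℓ₁ < a 2 - a 1 ∧ a 2 - a 1 < 3 * ℓ₁ := ha 1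
  have ha₂ : ℓ₁ < a 3 - a 2 ∧ a 3 - a 2 < 3 * ℓ₁ := ha 2
  have hc₀ : c 1 - c 0 = ℓ₂ := hc 0
  have hc₁ : c 2 - c 1 = ℓ₂ := hc 1
  have hc₂ : c 3 - c 2 = ℓ₂ := hc 2
  rcases hℓ with h | h
  · exact Or.inl ⟨by linarith, by linarith⟩
  · exact Or.inr ⟨by linarith, by linarith⟩

lemma exists_linked_portions_of_lt {a c : Fin 4 → ℝ} (ha : StrictMono a) (hc : StrictMono c)
    (hne : ∀ i j, a i ≠ c j) (hthick : BridgesDominateGap a c ∨ BridgesDominateGap c a)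
    (h₀ : a 0 < c 0) (h₁ : c 0 < a 3) (h₂ : a 3 < c 3) :
    ∃ s t : Portion, (s, t) ≠ (.whole, .whole) ∧
      IooLinked (a s.lo) (a s.hi) (c t.lo) (c t.hi) := by
  have ha₁ : a 1 < a 3 := ha (by decide)
  have hc₁ : c 0 < c 1 := hc (by decide)
  have hc₂ : c 2 < c 3 := hc (by decide)
  rcases (hne 1 0).lt_or_gt with h₃ | h₃
  swap
  · exact ⟨.left, .whole, by simp, Or.inl ⟨h₀, h₃, ha₁.trans h₂⟩⟩
  rcases (hne 2 0).lt_or_gt with h₄ | h₄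
  · exact ⟨.right, .whole, by simp, Or.inl ⟨h₄, h₁, h₂⟩⟩
  rcases (hne 3 1).lt_or_gt with h₅ | h₅
  · exact ⟨.whole, .left, by simp, Or.inl ⟨h₀, h₁, h₅⟩⟩
  rcases (hne 3 2).lt_or_gt with h₆ | h₆
  swap
  · exact ⟨.whole, .right, by simp, Or.inl ⟨h₀.trans (hc (by decide)), h₆, h₂⟩⟩
  rcases (hne 2 1).lt_or_gt with h₇ | h₇
  · exact ⟨.right, .left, by simp, Or.inr ⟨h₄, h₇, h₅⟩⟩
  -- now `[c 0, c 1]` lies in the gap of `a` and `[a 2, a 3]` in the gap of `c`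
  exfalso
  rcases hthick with ⟨-, h⟩ | ⟨h, -⟩ <;> linarith

lemma exists_linked_portions {a c : Fin 4 → ℝ} (ha : StrictMono a) (hc : StrictMono c)
    (hne : ∀ i j, a i ≠ c j) (hthick : BridgesDominateGap a c ∨ BridgesDominateGap c a)
    (hlink : IooLinked (a 0) (a 3) (c 0) (c 3)) :
    ∃ s t : Portion, (s, t) ≠ (.whole, .whole) ∧
      IooLinked (a s.lo) (a s.hi) (c t.lo) (c t.hi) := by
  rcases hlink with ⟨h₀, h₁, h₂⟩ | ⟨h₀, h₁, h₂⟩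
  · exact exists_linked_portions_of_lt ha hc hne hthick h₀ h₁ h₂
  · obtain ⟨t, s, hts, hlink⟩ := exists_linked_portions_of_lt hc ha (fun i j => (hne j i).symm)
      hthick.symm h₀ h₁ h₂
    exact ⟨s, t, fun h => hts (by simp_all), hlink.symm⟩

lemma one_div_three_pow_le_or (k₁ k₂ : ℕ) :
    (1 : ℝ) / 3 ^ k₂ ≤ 1 / 3 ^ k₁ ∨ (3 : ℝ) * (1 / 3 ^ k₁) ≤ 1 / 3 ^ k₂ := by
  rcases le_or_gt k₁ k₂ with h | h
  · left
    gcongr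
    norm_num
  · right
    obtain ⟨d, rfl⟩ := Nat.exists_eq_add_of_lt h
    calc 3 * (1 / 3 ^ (k₂ + d + 1)) = (1 : ℝ) / 3 ^ (k₂ + d) := by rw [pow_succ]; field_simp
      _ ≤ 1 / 3 ^ k₂ := by gcongr <;> norm_num

structure TriadicInterval where
  left : ℝ
  level : ℕ

namespace TriadicInterval

variable (I : TriadicInterval)

noncomputable def right : ℝ := I.left + 1 / 3 ^ I.level

def cantor : Set ℝ := (fun t => I.left + t / 3 ^ I.level) '' cantorThirds

noncomputable def point (i : Fin 4) : ℝ := I.left + (i : ℕ) / 3 ^ (I.level + 1)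

noncomputable def portion : Portion → TriadicInterval
  | .whole => I
  | .left => ⟨I.left, I.level + 1⟩
  | .right => ⟨I.left + 2 / 3 ^ (I.level + 1), I.level + 1⟩

lemma right_sub_left : I.right - I.left = 1 / 3 ^ I.level := by
  simp [right]

lemma left_lt_right : I.left < I.right := by
  have : (0 : ℝ) < 1 / 3 ^ I.level := by positivity
  linarith [I.right_sub_left]

lemma point_zero : I.point 0 = I.left := by simp [point]

lemma point_three : I.point 3 = I.right := by
  simp only [point, right, pow_succ]
  norm_num
  field_simp

lemma point_succ_sub_point_castSucc (i : Fin 3) :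
    I.point i.succ - I.point i.castSucc = 1 / 3 ^ (I.level + 1) := by
  simp only [point, Fin.val_succ, Fin.val_castSucc, Nat.cast_succ]
  ring

lemma left_portion (s : Portion) : (I.portion s).left = I.point s.lo := by
  cases s <;> simp [portion, Portion.lo, point]

lemma right_portion (s : Portion) : (I.portion s).right = I.point s.hi := by
  cases s
  · exact I.point_three.symm
  · simp only [portion, Portion.hi, point, right]; norm_num
  · simp only [portion, Portion.hi, point, right]; norm_num; ring

lemma level_le_level_portion (s : Portion) : I.level ≤ (I.portion s).level := by
  cases s <;> simp [portion]

lemma level_lt_level_portion {s : Portion} (hs : s ≠ .whole) :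
    I.level < (I.portion s).level := by
  cases s <;> simp_all [portion]

lemma level_add_lt_level_portion_add (J : TriadicInterval) {s t : Portion}
    (hst : (s, t) ≠ (.whole, .whole)) :
    I.level + J.level < (I.portion s).level + (J.portion t).level := by
  have hI := I.level_le_level_portion s
  have hJ := J.level_le_level_portion t
  by_cases hs : s = .whole
  · have := J.level_lt_level_portion (s := t) fun ht => hst (by rw [hs, ht])
    omega
  · have := I.level_lt_level_portion hs
    omega

lemma left_mem_cantor : I.left ∈ I.cantor :=
  ⟨0, cantorThirds_eq_cantorSet ▸ zero_mem_cantorSet, by simp⟩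

lemma right_mem_cantor : I.right ∈ I.cantor :=
  ⟨1, cantorThirds_eq_cantorSet ▸ one_mem_cantorSet, by simp [right]⟩

lemma isLeast_cantor : IsLeast I.cantor I.left := by
  refine ⟨I.left_mem_cantor, ?_⟩
  rintro _ ⟨t, ht, rfl⟩
  rw [cantorThirds_eq_cantorSet] at ht
  have := (cantorSet_subset_unitInterval ht).1
  simp only [le_add_iff_nonneg_right]
  positivity

lemma isGreatest_cantor : IsGreatest I.cantor I.right := by
  refine ⟨I.right_mem_cantor, ?_⟩
  rintro _ ⟨t, ht, rfl⟩
  rw [cantorThirds_eq_cantorSet] at ht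
  have := (cantorSet_subset_unitInterval ht).2
  simp only [right, add_le_add_iff_left]
  gcongr

lemma isCompact_cantor : IsCompact I.cantor := by
  rw [cantor, cantorThirds_eq_cantorSet]
  exact isCompact_cantorSet.image (by fun_prop)

lemma cantor_portion_subset (s : Portion) : (I.portion s).cantor ⊆ I.cantor := by
  rintro _ ⟨t, ht, rfl⟩
  rw [cantorThirds_eq_cantorSet] at ht
  cases s
  · exact ⟨t, cantorThirds_eq_cantorSet ▸ ht, rfl⟩
  · refine ⟨t / 3, cantorThirds_eq_cantorSet ▸ div_three_mem_cantorSet ht, ?_⟩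
    simp only [portion, pow_succ]
    ring
  · refine ⟨(2 + t) / 3, cantorThirds_eq_cantorSet ▸ two_add_div_three_mem_cantorSet ht, ?_⟩
    simp only [portion, pow_succ]
    ring

lemma point_mem_cantor (i : Fin 4) : I.point i ∈ I.cantor := by
  fin_cases i
  · exact I.point_zero ▸ I.left_mem_cantor
  · exact I.right_portion .left ▸ I.cantor_portion_subset .left (right_mem_cantor _)
  · exact I.left_portion .right ▸ I.cantor_portion_subset .right (left_mem_cantor _)
  · exact I.point_three ▸ I.right_mem_cantor

end TriadicInterval

lemma _root_.IsCantorSection.exists_eq_cantor {K : Set ℝ} (h : IsCantorSection K) :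
    ∃ I : TriadicInterval, K = I.cantor :=
  let ⟨n, a, hK, _⟩ := h
  ⟨⟨a, n⟩, hK⟩

def LinkedPair (g : ℝ → ℝ) (K₁ K₂ : Set ℝ) (I J : TriadicInterval) : Prop :=
  I.cantor ⊆ K₁ ∧ J.cantor ⊆ K₂ ∧ IooLinked (g I.left) (g I.right) J.left J.right

namespace LinkedPair

variable {g : ℝ → ℝ} {K₁ K₂ : Set ℝ} {I J : TriadicInterval}

lemma exists_refinement (hslope : SlopesIn g K₁ 1 3) (hdisj : ∀ x ∈ K₁, g x ∉ K₂)
    (h : LinkedPair g K₁ K₂ I J) :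
    ∃ I' J', LinkedPair g K₁ K₂ I' J' ∧ I.level + J.level < I'.level + J'.level := by
  obtain ⟨hI, hJ, hlink⟩ := h
  have hℓ₁ : (0 : ℝ) < 1 / 3 ^ (I.level + 1) := by positivity
  have hℓ₂ : (0 : ℝ) < 1 / 3 ^ (J.level + 1) := by positivity
  have hsteps (i : Fin 3) :
      1 / 3 ^ (I.level + 1) < g (I.point i.succ) - g (I.point i.castSucc) ∧
        g (I.point i.succ) - g (I.point i.castSucc) < 3 * (1 / 3 ^ (I.level + 1)) := by
    have hstep := I.point_succ_sub_point_castSucc i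
    have := hslope _ (hI (I.point_mem_cantor i.castSucc)) _ (hI (I.point_mem_cantor i.succ))
      (by linarith)
    rwa [hstep, one_mul] at this
  have ha : StrictMono fun i => g (I.point i) :=
    Fin.strictMono_iff_lt_succ.2 fun i => by linarith [(hsteps i).1]
  have hc : StrictMono J.point :=
    Fin.strictMono_iff_lt_succ.2 fun i => by linarith [J.point_succ_sub_point_castSucc i]
  have hne (i j : Fin 4) : g (I.point i) ≠ J.point j := fun hij =>
    hdisj _ (hI (I.point_mem_cantor i)) (hij ▸ hJ (J.point_mem_cantor j))
  have hthick := bridgesDominateGap_or_of_steps (a := fun i => g (I.point i)) hsteps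
    J.point_succ_sub_point_castSucc (one_div_three_pow_le_or (I.level + 1) (J.level + 1))
  obtain ⟨s, t, hst, hlink'⟩ := exists_linked_portions ha hc hne hthick
    (by rwa [I.point_zero, I.point_three, J.point_zero, J.point_three])
  refine ⟨I.portion s, J.portion t, ⟨(I.cantor_portion_subset s).trans hI,
    (J.cantor_portion_subset t).trans hJ, ?_⟩, I.level_add_lt_level_portion_add J hst⟩
  rwa [I.left_portion, I.right_portion, J.left_portion, J.right_portion]

lemma exists_level_add_ge (hslope : SlopesIn g K₁ 1 3) (hdisj : ∀ x ∈ K₁, g x ∉ K₂)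
    (h : LinkedPair g K₁ K₂ I J) (N : ℕ) :
    ∃ I' J', LinkedPair g K₁ K₂ I' J' ∧ N ≤ I'.level + J'.level := by
  induction N with
  | zero => exact ⟨I, J, h, Nat.zero_le _⟩
  | succ N ih =>
    obtain ⟨I', J', h', hN⟩ := ih
    obtain ⟨I'', J'', h'', hlt⟩ := h'.exists_refinement hslope hdisj
    exact ⟨I'', J'', h'', by omega⟩

lemma exists_abs_sub_lt (hslope : SlopesIn g K₁ 1 3) (h : LinkedPair g K₁ K₂ I J) :
    ∃ x ∈ K₁, ∃ y ∈ K₂,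
      |g x - y| < 3 / 3 ^ I.level ∧ |g x - y| < 1 / 3 ^ J.level := by
  obtain ⟨hI, hJ, hlink⟩ := h
  obtain ⟨u, hu, y, hy, hu₁, hu₂⟩ := hlink.exists_endpoints_close
  obtain ⟨x, hx, rfl⟩ : ∃ x ∈ K₁, g x = u := by
    rcases hu with rfl | rfl
    exacts [⟨_, hI I.left_mem_cantor, rfl⟩, ⟨_, hI I.right_mem_cantor, rfl⟩]
  have hy : y ∈ K₂ := by
    rcases hy with rfl | rfl
    exacts [hJ J.left_mem_cantor, hJ J.right_mem_cantor]
  refine ⟨x, hx, y, hy, ?_, by rwa [J.right_sub_left] at hu₂⟩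
  calc |g x - y| < g I.right - g I.left := hu₁
    _ < 3 * (I.right - I.left) :=
      (hslope _ (hI I.left_mem_cantor) _ (hI I.right_mem_cantor) I.left_lt_right).2
    _ = 3 / 3 ^ I.level := by rw [I.right_sub_left]; ring

theorem exists_mem_image_mem (hK₁ : IsCompact K₁) (hK₂ : IsClosed K₂)
    (hg : ContinuousOn g K₁) (hslope : SlopesIn g K₁ 1 3) (h : LinkedPair g K₁ K₂ I J) :
    ∃ x ∈ K₁, g x ∈ K₂ := by
  by_contra! hdisj
  obtain ⟨δ, hδ, hsep⟩ := exists_pos_lt_dist_of_disjoint (hK₁.image_of_continuousOn hg) hK₂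
    (disjoint_left.2 (by rintro _ ⟨x, hx, rfl⟩; exact hdisj x hx))
  obtain ⟨N, hN⟩ := pow_unbounded_of_one_lt (3 / δ) (by norm_num : (1 : ℝ) < 3)
  have hsmall : 3 / 3 ^ N < δ := by
    rwa [div_lt_iff₀ (by positivity), mul_comm, ← div_lt_iff₀ hδ]
  obtain ⟨I', J', h', hlevel⟩ := h.exists_level_add_ge hslope hdisj (2 * N)
  obtain ⟨x, hx, y, hy, hI', hJ'⟩ := h'.exists_abs_sub_lt hslope
  have hclose : |g x - y| < 3 / 3 ^ N := by
    rcases le_total N I'.level with hN' | hN'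
    · calc |g x - y| < 3 / 3 ^ I'.level := hI'
        _ ≤ 3 / 3 ^ N := by gcongr; norm_num
    · have hNJ : N ≤ J'.level := by omega
      calc |g x - y| < 1 / 3 ^ J'.level := hJ'
        _ ≤ 3 / 3 ^ N := by gcongr <;> norm_num
  have hfar := hsep _ ⟨x, hx, rfl⟩ y hy
  rw [Real.dist_eq] at hfar
  linarith

end LinkedPair

end CantorGap

theorem cantor_section_image_inter_general (K1 K2 : Set ℝ)
    (h1 : IsCantorSection K1) (h2 : IsCantorSection K2) (g : ℝ → ℝ)
    (hg : ContDiffOn ℝ 1 g (Set.Icc (sInf K1) (sSup K1)))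
    (hg' : ∀ x ∈ Set.Icc (sInf K1) (sSup K1),
      1 < derivWithin g (Set.Icc (sInf K1) (sSup K1)) x ∧
      derivWithin g (Set.Icc (sInf K1) (sSup K1)) x < 3)
    (hlink : Linked K2 (g '' K1)) :
    (K2 ∩ g '' K1).Nonempty := by
  obtain ⟨I, rfl⟩ := h1.exists_eq_cantor
  obtain ⟨J, rfl⟩ := h2.exists_eq_cantor
  rw [I.isLeast_cantor.csInf_eq, I.isGreatest_cantor.csSup_eq] at hg hg'
  have hsub : I.cantor ⊆ Icc I.left I.right := fun x hx =>
    ⟨I.isLeast_cantor.2 hx, I.isGreatest_cantor.2 hx⟩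
  have hslope : CantorGap.SlopesIn g I.cantor 1 3 :=
    ((convex_Icc _ _).slopesIn_of_lt_derivWithin_lt (hg.differentiableOn one_ne_zero)
      fun x hx => hg' x (interior_subset hx)).mono hsub
  have hmono := hslope.monotoneOn zero_le_one
  have hlink' := hlink.iooLinked
  rw [J.isLeast_cantor.csInf_eq, J.isGreatest_cantor.csSup_eq,
    (hmono.map_isLeast I.isLeast_cantor).csInf_eq,
    (hmono.map_isGreatest I.isGreatest_cantor).csSup_eq] at hlink'
  obtain ⟨x, hx, hgx⟩ := CantorGap.LinkedPair.exists_mem_image_mem I.isCompact_cantor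
    J.isCompact_cantor.isClosed (hg.continuousOn.mono hsub) hslope
    ⟨subset_rfl, subset_rfl, hlink'.symm⟩
  exact ⟨g x, hgx, x, hx, rfl⟩

/-- the gap lemma for sections of the middle-thirds Cantor set. -/
theorem cantor_section_image_inter (K1 K2 : Set ℝ)
    (h1 : IsCantorSection K1) (h2 : IsCantorSection K2) (g : ℝ → ℝ)
    (hg : ContDiffOn ℝ 1 g (Set.Icc (sInf K1) (sSup K1)))
    (hmono : MonotoneOn g (Set.Icc (sInf K1) (sSup K1)))
    (hg' : ∀ x ∈ Set.Icc (sInf K1) (sSup K1),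
      1 < derivWithin g (Set.Icc (sInf K1) (sSup K1)) x ∧
      derivWithin g (Set.Icc (sInf K1) (sSup K1)) x < 3)
    (hlink : Linked K2 (g '' K1)) :
    (K2 ∩ g '' K1).Nonempty :=
  cantor_section_image_inter_general K1 K2 h1 h2 g hg hg' hlink
end

section
/- Let K_1, K_2 ⊂ ℝ be Cantor sets with τ(K_1)·τ(K_2) ≥ 1 and let ℓ be the length of the convex hull of K_2 (assuming the convex hulls of K_1, K_2 have a common length ℓ). For any x = (x_1, x_2) ∈ ℝ² with both coordinates nonzero, the pinned dot product set Π_x(K_1 × K_2) = { x·y : y ∈ K_1 × K_2 } contains an interval of length at least ℓ·min(|x_1|, |x_2|). -/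
open Set

/-!
A real `t` lies in the pinned dot product set iff the affine copies `t - x₁ K₁` and `x₂ K₂` meet.
Affine maps preserve thickness, so by Newhouse's gap lemma the two copies meet as soon as they are
linked; as their convex hulls have lengths `|x₁| ℓ` and `|x₂| ℓ`, this happens for all `t` in an
interval of length `min |x₁| |x₂| * ℓ`.

The gap lemma is proved by descent. If two linked Cantor sets `A`, `B` were disjoint, they would
contain a linked pair of gaps. By `τ(A) τ(B) ≥ 1`, an endpoint of one gap lies in a bridge next to
the other gap, hence in a strictly shorter gap, which is again linked with the first one. But the
gaps occurring in linked pairs are longer than the positive distance between `A` and `B`, so there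
are only finitely many of them and the total length of a linked pair cannot decrease forever.
-/

open Topology

variable {K : Set ℝ} {a b c d p q u ℓ : ℝ}

namespace IsCantorSet

lemma bddBelow (h : IsCantorSet K) : BddBelow K := h.2.1.bddBelow

lemma bddAbove (h : IsCantorSet K) : BddAbove K := h.2.1.bddAbove

lemma sInf_mem (h : IsCantorSet K) : sInf K ∈ K := h.2.1.sInf_mem h.1

lemma sSup_mem (h : IsCantorSet K) : sSup K ∈ K := h.2.1.sSup_mem h.1

lemma exists_mem_ne (h : IsCantorSet K) (hx : a ∈ K) {U : Set ℝ} (hU : U ∈ 𝓝 a) :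
    ∃ y ∈ U ∩ K, y ≠ a :=
  preperfect_iff_nhds.1 h.2.2.1.acc a hx U hU

lemma sInf_lt_sSup (h : IsCantorSet K) : sInf K < sSup K := by
  obtain ⟨y, ⟨-, hy⟩, hne⟩ := h.exists_mem_ne h.sInf_mem Filter.univ_mem
  exact (csInf_le h.bddBelow hy).lt_of_ne' hne |>.trans_le (le_csSup h.bddAbove hy)

end IsCantorSet

namespace IsGap

lemma notMem (hg : IsGap K a b) {y : ℝ} (hay : a < y) (hyb : y < b) : y ∉ K :=
  fun hy => (Set.eq_empty_iff_forall_notMem.1 hg.2.2.2) y ⟨⟨hay, hyb⟩, hy⟩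

lemma right_le_of_lt (hg : IsGap K a b) (hg' : IsGap K c d) (hac : a < c) : b ≤ c :=
  le_of_not_gt fun hcb => hg.notMem hac hcb hg'.2.1

lemma right_unique_s10 (hg : IsGap K a b) (hg' : IsGap K a c) : b = c :=
  le_antisymm (le_of_not_gt fun h => hg.notMem hg'.1 h hg'.2.2.1)
    (le_of_not_gt fun h => hg'.notMem hg.1 h hg.2.2.1)

end IsGap

lemma rightTargets_bddBelow : BddBelow (rightTargets K u ℓ) := ⟨u, fun _ hx => hx.1.le⟩

lemma leftTargets_bddAbove : BddAbove (leftTargets K u ℓ) := ⟨u, fun _ hx => hx.1.le⟩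

namespace IsCantorSet

lemma sInf_lt_of_isGap (h : IsCantorSet K) (hg : IsGap K a b) : sInf K < a := by
  obtain ⟨y, ⟨hyb, hy⟩, hne⟩ := h.exists_mem_ne hg.2.1 (Iio_mem_nhds hg.1)
  have hya : y < a := hne.lt_of_le (le_of_not_gt fun hay => hg.notMem hay hyb hy)
  exact (csInf_le h.bddBelow hy).trans_lt hya

lemma lt_sSup_of_isGap (h : IsCantorSet K) (hg : IsGap K a b) : b < sSup K := by
  obtain ⟨y, ⟨hay, hy⟩, hne⟩ := h.exists_mem_ne hg.2.2.1 (Ioi_mem_nhds hg.1)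
  have hby : b < y := hne.symm.lt_of_le (le_of_not_gt fun hyb => hg.notMem hay hyb hy)
  exact hby.trans_le (le_csSup h.bddAbove hy)

lemma not_isGap_of_isGap (h : IsCantorSet K) (hg : IsGap K a b) : ¬ IsGap K b c := by
  intro hg'
  obtain ⟨y, ⟨⟨hay, hyc⟩, hy⟩, hne⟩ :=
    h.exists_mem_ne hg.2.2.1 (Ioo_mem_nhds hg.1 hg'.1)
  rcases hne.lt_or_gt with hyb | hby
  · exact hg.notMem hay hyb hy
  · exact hg'.notMem hby hyc hy

lemma exists_isGap_of_notMem (h : IsCantorSet K) {x : ℝ} (hx : x ∉ K) (h1 : sInf K < x)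
    (h2 : x < sSup K) : ∃ a b, IsGap K a b ∧ a < x ∧ x < b := by
  have hL : IsCompact (K ∩ Iic x) := h.2.1.inter_right isClosed_Iic
  have hR : IsCompact (K ∩ Ici x) := h.2.1.inter_right isClosed_Ici
  have haL := hL.sSup_mem ⟨sInf K, h.sInf_mem, h1.le⟩
  have hbR := hR.sInf_mem ⟨sSup K, h.sSup_mem, h2.le⟩
  have hax : sSup (K ∩ Iic x) < x := haL.2.lt_of_ne fun he => hx (he ▸ haL.1)
  have hxb : x < sInf (K ∩ Ici x) := hbR.2.lt_of_ne' fun he => hx (he ▸ hbR.1)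
  refine ⟨_, _, ⟨hax.trans hxb, haL.1, hbR.1, ?_⟩, hax, hxb⟩
  refine Set.eq_empty_iff_forall_notMem.2 fun y ⟨⟨hay, hyb⟩, hy⟩ => ?_
  rcases le_or_gt y x with hyx | hxy
  · exact hay.not_ge (le_csSup hL.bddAbove ⟨hy, hyx⟩)
  · exact hyb.not_ge (csInf_le hR.bddBelow ⟨hy, hxy.le⟩)

lemma sSup_mem_rightTargets (h : IsCantorSet K) (hg : IsGap K a b) :
    sSup K ∈ rightTargets K b ℓ :=
  ⟨h.lt_sSup_of_isGap hg, Or.inr rfl⟩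

lemma sInf_mem_leftTargets (h : IsCantorSet K) (hg : IsGap K a b) :
    sInf K ∈ leftTargets K a ℓ :=
  ⟨h.sInf_lt_of_isGap hg, Or.inr rfl⟩

lemma thicknessValues_nonneg (h : IsCantorSet K) {r : ℝ} (hr : r ∈ thicknessValues K) :
    0 ≤ r := by
  obtain ⟨a, b, hg, rfl | rfl⟩ := hr
  · have : b ≤ sInf (rightTargets K b (b - a)) :=
      le_csInf ⟨_, h.sSup_mem_rightTargets hg⟩ fun _ hx => hx.1.le
    exact div_nonneg (by linarith) (by linarith [hg.1])
  · have : sSup (leftTargets K a (b - a)) ≤ a :=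
      csSup_le ⟨_, h.sInf_mem_leftTargets hg⟩ fun _ hx => hx.1.le
    exact div_nonneg (by linarith) (by linarith [hg.1])

lemma thickness_nonneg (h : IsCantorSet K) : 0 ≤ thickness K :=
  Real.sInf_nonneg fun _ => h.thicknessValues_nonneg

lemma thickness_le (h : IsCantorSet K) {r : ℝ} (hr : r ∈ thicknessValues K) :
    thickness K ≤ r :=
  csInf_le ⟨0, fun _ => h.thicknessValues_nonneg⟩ hr

lemma thickness_mul_le_right (h : IsCantorSet K) (hg : IsGap K a b) :
    thickness K * (b - a) ≤ sInf (rightTargets K b (b - a)) - b :=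
  (le_div_iff₀ (sub_pos.2 hg.1)).1 (h.thickness_le ⟨a, b, hg, Or.inl rfl⟩)

lemma thickness_mul_le_left (h : IsCantorSet K) (hg : IsGap K a b) :
    thickness K * (b - a) ≤ a - sSup (leftTargets K a (b - a)) :=
  (le_div_iff₀ (sub_pos.2 hg.1)).1 (h.thickness_le ⟨a, b, hg, Or.inr rfl⟩)

lemma exists_shorter_gap_right (h : IsCantorSet K) (hg : IsGap K a b) (hd : d ∉ K) (hbd : b < d)
    (hclose : d - b < thickness K * (b - a)) :
    ∃ a' b', IsGap K a' b' ∧ b < a' ∧ a' < d ∧ d < b' ∧ b' - a' < b - a := by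
  have hdR : d < sInf (rightTargets K b (b - a)) := by linarith [h.thickness_mul_le_right hg]
  obtain ⟨a', b', hg', ha'd, hdb'⟩ := h.exists_isGap_of_notMem hd
    ((csInf_le h.bddBelow hg.2.2.1).trans_lt hbd)
    (hdR.trans_le (csInf_le rightTargets_bddBelow (h.sSup_mem_rightTargets hg)))
  have hba' : b < a' :=
    (le_of_not_gt fun ha'b => hg'.notMem ha'b (hbd.trans hdb') hg.2.2.1).lt_of_ne
      fun he => h.not_isGap_of_isGap hg (he ▸ hg')
  refine ⟨a', b', hg', hba', ha'd, hdb', lt_of_not_ge fun hlen => ?_⟩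
  exact hdR.not_ge
    ((csInf_le rightTargets_bddBelow ⟨hba', Or.inl ⟨b', hg', hlen⟩⟩).trans ha'd.le)

lemma exists_shorter_gap_left (h : IsCantorSet K) (hg : IsGap K a b) (hd : d ∉ K) (hda : d < a)
    (hclose : a - d < thickness K * (b - a)) :
    ∃ a' b', IsGap K a' b' ∧ a' < d ∧ d < b' ∧ b' < a ∧ b' - a' < b - a := by
  have hdL : sSup (leftTargets K a (b - a)) < d := by linarith [h.thickness_mul_le_left hg]
  obtain ⟨a', b', hg', ha'd, hdb'⟩ := h.exists_isGap_of_notMem hd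
    ((le_csSup leftTargets_bddAbove (h.sInf_mem_leftTargets hg)).trans_lt hdL)
    (hda.trans_le (le_csSup h.bddAbove hg.2.1))
  have hb'a : b' < a :=
    (le_of_not_gt fun hab' => hg'.notMem (ha'd.trans hda) hab' hg.2.1).lt_of_ne
      fun he => h.not_isGap_of_isGap (he ▸ hg') hg
  refine ⟨a', b', hg', ha'd, hdb', hb'a, lt_of_not_ge fun hlen => ?_⟩
  exact hdL.not_ge
    (hdb'.le.trans (le_csSup leftTargets_bddAbove ⟨hb'a, Or.inl ⟨a', hg', hlen⟩⟩))

end IsCantorSet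

lemma finite_setOf_isGap_lt_sub (hb : BddBelow K) (ha : BddAbove K) {ε : ℝ} (hε : 0 < ε) :
    {I : ℝ × ℝ | IsGap K I.1 I.2 ∧ ε < I.2 - I.1}.Finite := by
  obtain ⟨m, hm⟩ := hb
  obtain ⟨M, hM⟩ := ha
  -- distinct long gaps have left endpoints more than `ε` apart, so `⌊a / ε⌋` tells them apart
  refine ((finite_Icc ⌊m / ε⌋ ⌊M / ε⌋).subset ?_).of_finite_image
    (f := fun I => ⌊I.1 / ε⌋) ?_
  · rintro _ ⟨I, hI, rfl⟩
    exact ⟨Int.floor_le_floor (div_le_div_of_nonneg_right (hm hI.1.2.1) hε.le),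
      Int.floor_le_floor (div_le_div_of_nonneg_right (hM hI.1.2.1) hε.le)⟩
  · intro I hI J hJ hIJ
    have hdist : |I.1 - J.1| < ε := by
      have := Int.abs_sub_lt_one_of_floor_eq_floor hIJ
      rwa [← sub_div, abs_div, abs_of_pos hε, div_lt_one hε] at this
    have h1 : I.1 = J.1 := by
      obtain ⟨h₁, h₂⟩ := abs_sub_lt_iff.1 hdist
      by_contra hne
      rcases lt_or_gt_of_ne hne with hlt | hlt
      · linarith [hI.1.right_le_of_lt hJ.1 hlt, hI.2]
      · linarith [hJ.1.right_le_of_lt hI.1 hlt, hJ.2]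
    exact Prod.ext h1 (hI.1.right_unique_s10 (h1 ▸ hJ.1))

def LinkedGaps (A B : Set ℝ) (I J : ℝ × ℝ) : Prop :=
  IsGap A I.1 I.2 ∧ IsGap B J.1 J.2 ∧
    (I.1 < J.1 ∧ J.1 < I.2 ∧ I.2 < J.2 ∨ J.1 < I.1 ∧ I.1 < J.2 ∧ J.2 < I.2)

section GapLemma

variable {A B : Set ℝ} {I J : ℝ × ℝ}

lemma LinkedGaps.symm (hl : LinkedGaps A B I J) : LinkedGaps B A J I :=
  ⟨hl.2.1, hl.1, hl.2.2.symm⟩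

lemma LinkedGaps.lt_sub {ε : ℝ} (hsep : ∀ x ∈ A, ∀ y ∈ B, ε < |x - y|)
    (hl : LinkedGaps A B I J) : ε < I.2 - I.1 ∧ ε < J.2 - J.1 := by
  obtain ⟨hI, hJ, ⟨h1, h2, h3⟩ | ⟨h1, h2, h3⟩⟩ := hl
  · have := hsep _ hI.2.2.1 _ hJ.2.1
    rw [abs_of_pos (sub_pos.2 h2)] at this
    constructor <;> linarith
  · have := hsep _ hI.2.1 _ hJ.2.2.1
    rw [abs_of_neg (sub_neg.2 h2)] at this
    constructor <;> linarith

lemma exists_linkedGaps_of_lt (hA : IsCantorSet A) (hB : IsCantorSet B) (hAB : Disjoint A B)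
    (h1 : sInf A < sInf B) (h2 : sInf B < sSup A) (h3 : sSup A < sSup B) :
    ∃ I J, LinkedGaps A B I J := by
  obtain ⟨a, b, hg, hab, hbB⟩ :=
    hA.exists_isGap_of_notMem (hAB.notMem_of_mem_right hB.sInf_mem) h1 h2
  obtain ⟨c, d, hh, hcb, hbd⟩ := hB.exists_isGap_of_notMem (hAB.notMem_of_mem_left hg.2.2.1) hbB
    ((le_csSup hA.bddAbove hg.2.2.1).trans_lt h3)
  exact ⟨(a, b), (c, d), hg, hh,
    Or.inl ⟨hab.trans_le (csInf_le hB.bddBelow hh.2.1), hcb, hbd⟩⟩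

lemma linked_of_lt (h1 : sInf B < sInf A) (h2 : sInf A < sSup B)
    (h3 : sSup B < sSup A) : Linked A B := by
  refine ⟨⟨(sInf A + sSup B) / 2, ⟨by linarith, by linarith⟩, by linarith, by linarith⟩,
    fun hsub => ?_, fun hsub => ?_⟩
  · have : (sSup B + sSup A) / 2 ∈ Ioo (sInf B) (sSup B) := hsub ⟨by linarith, by linarith⟩
    linarith [this.2]
  · have : (sInf B + sInf A) / 2 ∈ Ioo (sInf A) (sSup A) := hsub ⟨by linarith, by linarith⟩
    linarith [this.1]

lemma Linked.lt_or_lt (hA : sInf A < sSup A) (hB : sInf B < sSup B) (hl : Linked A B) :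
    sInf A < sInf B ∧ sInf B < sSup A ∧ sSup A < sSup B ∨
      sInf B < sInf A ∧ sInf A < sSup B ∧ sSup B < sSup A := by
  obtain ⟨⟨z, ⟨h1, h2⟩, h3, h4⟩, hAB, hBA⟩ := hl
  rw [Ioo_subset_Ioo_iff hA] at hAB
  rw [Ioo_subset_Ioo_iff hB] at hBA
  push Not at hAB hBA
  rcases lt_or_ge (sInf A) (sInf B) with h | h
  · exact Or.inl ⟨h, by linarith, hBA h.le⟩
  · exact Or.inr ⟨h.lt_of_ne fun he => (hAB h).not_gt (hBA he.ge), by linarith, hAB h⟩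

lemma Linked.exists_linkedGaps (hA : IsCantorSet A) (hB : IsCantorSet B) (hAB : Disjoint A B)
    (hl : Linked A B) : ∃ I J, LinkedGaps A B I J := by
  rcases hl.lt_or_lt hA.sInf_lt_sSup hB.sInf_lt_sSup with ⟨h1, h2, h3⟩ | ⟨h1, h2, h3⟩
  · exact exists_linkedGaps_of_lt hA hB hAB h1 h2 h3
  · obtain ⟨J, I, hl⟩ := exists_linkedGaps_of_lt hB hA hAB.symm h1 h2 h3
    exact ⟨I, J, hl.symm⟩

lemma exists_linkedGaps_shorter_of_lt (hA : IsCantorSet A) (hB : IsCantorSet B)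
    (hτ : 1 ≤ thickness A * thickness B) (hAB : Disjoint A B) (hg : IsGap A a b)
    (hh : IsGap B c d) (hac : a < c) (hcb : c < b) (hbd : b < d) :
    ∃ I J, LinkedGaps A B I J ∧ I.2 - I.1 + (J.2 - J.1) < b - a + (d - c) := by
  -- either `d` lies in the right bridge of `(a, b)`, or, as `τ(A) τ(B) ≥ 1`, `a` lies in the
  -- left bridge of `(c, d)`
  rcases le_or_gt (d - c) (thickness A * (b - a)) with hle | hlt
  · obtain ⟨a', b', hg', hba', ha'd, hdb', hlen⟩ :=
      hA.exists_shorter_gap_right hg (hAB.notMem_of_mem_right hh.2.2.1) hbd (by linarith)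
    exact ⟨(a', b'), (c, d), ⟨hg', hh, Or.inr ⟨hcb.trans hba', ha'd, hdb'⟩⟩, by linarith⟩
  · have hle : b - a ≤ thickness B * (d - c) := calc
      b - a ≤ thickness A * thickness B * (b - a) :=
        le_mul_of_one_le_left (sub_pos.2 hg.1).le hτ
      _ = thickness B * (thickness A * (b - a)) := by ring
      _ ≤ thickness B * (d - c) := mul_le_mul_of_nonneg_left hlt.le hB.thickness_nonneg
    obtain ⟨c', d', hh', hc'a, had', hd'c, hlen⟩ :=
      hB.exists_shorter_gap_left hh (hAB.notMem_of_mem_left hg.2.1) hac (by linarith)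
    exact ⟨(a, b), (c', d'), ⟨hg, hh', Or.inr ⟨hc'a, had', hd'c.trans hcb⟩⟩, by linarith⟩

lemma LinkedGaps.exists_shorter (hA : IsCantorSet A) (hB : IsCantorSet B)
    (hτ : 1 ≤ thickness A * thickness B) (hAB : Disjoint A B) (hl : LinkedGaps A B I J) :
    ∃ I' J', LinkedGaps A B I' J' ∧ I'.2 - I'.1 + (J'.2 - J'.1) < I.2 - I.1 + (J.2 - J.1) := by
  obtain ⟨hI, hJ, ⟨h1, h2, h3⟩ | ⟨h1, h2, h3⟩⟩ := hl
  · exact exists_linkedGaps_shorter_of_lt hA hB hτ hAB hI hJ h1 h2 h3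
  · obtain ⟨J', I', hl', hlt⟩ :=
      exists_linkedGaps_shorter_of_lt hB hA (mul_comm (thickness A) _ ▸ hτ) hAB.symm
        hJ hI h1 h2 h3
    exact ⟨I', J', hl'.symm, by linarith⟩

theorem IsCantorSet.inter_nonempty_of_linked (hA : IsCantorSet A) (hB : IsCantorSet B)
    (hτ : 1 ≤ thickness A * thickness B) (hl : Linked A B) : (A ∩ B).Nonempty := by
  by_contra hne
  have hAB : Disjoint A B := disjoint_iff_inter_eq_empty.2 (not_nonempty_iff_eq_empty.1 hne)
  obtain ⟨ε, hε, hsep⟩ := Metric.exists_pos_forall_lt_edist hA.2.1 hB.2.1.isClosed hAB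
  have hsep' : ∀ x ∈ A, ∀ y ∈ B, (ε : ℝ) < |x - y| := fun x hx y hy => by
    have := hsep x hx y hy
    rw [edist_nndist, ENNReal.coe_lt_coe] at this
    rw [← Real.dist_eq, ← coe_nndist]
    exact_mod_cast this
  have hfin : {IJ : (ℝ × ℝ) × (ℝ × ℝ) | LinkedGaps A B IJ.1 IJ.2}.Finite :=
    ((finite_setOf_isGap_lt_sub hA.bddBelow hA.bddAbove hε).prod
      (finite_setOf_isGap_lt_sub hB.bddBelow hB.bddAbove hε)).subset
      fun IJ hIJ => ⟨⟨hIJ.1, (hIJ.lt_sub hsep').1⟩, ⟨hIJ.2.1, (hIJ.lt_sub hsep').2⟩⟩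
  obtain ⟨I, J, hIJ⟩ := hl.exists_linkedGaps hA hB hAB
  obtain ⟨⟨I, J⟩, hIJ, hmin⟩ := exists_min_image _
    (fun IJ : (ℝ × ℝ) × (ℝ × ℝ) => IJ.1.2 - IJ.1.1 + (IJ.2.2 - IJ.2.1)) hfin
    ⟨(I, J), hIJ⟩
  obtain ⟨I', J', hIJ', hlt⟩ := LinkedGaps.exists_shorter hA hB hτ hAB hIJ
  exact (hmin (I', J') hIJ').not_gt hlt

end GapLemma

section Affine

variable {f : ℝ → ℝ} {S : Set ℝ}

lemma isGap_image_iff_of_strictMono (hf : StrictMono f) :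
    IsGap (f '' K) (f a) (f b) ↔ IsGap K a b := by
  have hpre : f ⁻¹' Ioo (f a) (f b) = Ioo a b := by ext; simp [hf.lt_iff_lt]
  rw [IsGap, IsGap, hf.lt_iff_lt, hf.injective.mem_set_image, hf.injective.mem_set_image,
    inter_comm, ← image_inter_preimage, hpre, image_eq_empty, inter_comm]

lemma isGap_image_iff_of_strictAnti (hf : StrictAnti f) :
    IsGap (f '' K) (f b) (f a) ↔ IsGap K a b := by
  have hpre : f ⁻¹' Ioo (f b) (f a) = Ioo a b := by ext; simp [hf.lt_iff_gt, and_comm]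
  rw [IsGap, IsGap, hf.lt_iff_gt, hf.injective.mem_set_image, hf.injective.mem_set_image,
    inter_comm, ← image_inter_preimage, hpre, image_eq_empty, inter_comm]
  tauto

lemma strictMono_affine (hq : 0 < q) : StrictMono fun x => p + q * x :=
  (strictMono_mul_left_of_pos hq).const_add p

lemma strictAnti_affine (hq : q < 0) : StrictAnti fun x => p + q * x :=
  (strictAnti_mul_left hq).const_add p

lemma sInf_image_affine_of_pos (hq : 0 < q) (hS : S.Nonempty) (hS' : BddBelow S) :
    sInf ((fun x => p + q * x) '' S) = p + q * sInf S :=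
  ((strictMono_affine hq).monotone.map_csInf_of_continuousAt (by fun_prop) hS hS').symm

lemma sSup_image_affine_of_pos (hq : 0 < q) (hS : S.Nonempty) (hS' : BddAbove S) :
    sSup ((fun x => p + q * x) '' S) = p + q * sSup S :=
  ((strictMono_affine hq).monotone.map_csSup_of_continuousAt (by fun_prop) hS hS').symm

lemma sInf_image_affine_of_neg (hq : q < 0) (hS : S.Nonempty) (hS' : BddAbove S) :
    sInf ((fun x => p + q * x) '' S) = p + q * sSup S :=
  ((strictAnti_affine hq).antitone.map_csSup_of_continuousAt (by fun_prop) hS hS').symm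

lemma sSup_image_affine_of_neg (hq : q < 0) (hS : S.Nonempty) (hS' : BddBelow S) :
    sSup ((fun x => p + q * x) '' S) = p + q * sInf S :=
  ((strictAnti_affine hq).antitone.map_csInf_of_continuousAt (by fun_prop) hS hS').symm

lemma rightTargets_image_affine_of_pos (h : IsCantorSet K) (hq : 0 < q) :
    rightTargets ((fun x => p + q * x) '' K) (p + q * u) (q * ℓ) =
      (fun x => p + q * x) '' rightTargets K u ℓ := by
  have hf := strictMono_affine (p := p) hq
  have hsup := sSup_image_affine_of_pos (p := p) hq h.1 h.bddAbove
  ext y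
  constructor
  · rintro ⟨huy, ⟨v, hg, hl⟩ | rfl⟩
    · obtain ⟨a, -, rfl⟩ := hg.2.1
      obtain ⟨b, -, rfl⟩ := hg.2.2.1
      exact ⟨a, ⟨hf.lt_iff_lt.1 huy, Or.inl ⟨b, (isGap_image_iff_of_strictMono hf).1 hg,
        le_of_mul_le_mul_left (by linarith) hq⟩⟩, rfl⟩
    · exact ⟨sSup K, ⟨hf.lt_iff_lt.1 (hsup ▸ huy), Or.inr rfl⟩, hsup.symm⟩
  · rintro ⟨x, ⟨hux, ⟨b, hg, hl⟩ | rfl⟩, rfl⟩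
    · exact ⟨hf hux, Or.inl ⟨_, (isGap_image_iff_of_strictMono hf).2 hg, by nlinarith⟩⟩
    · exact ⟨hf hux, Or.inr hsup.symm⟩

lemma leftTargets_image_affine_of_pos (h : IsCantorSet K) (hq : 0 < q) :
    leftTargets ((fun x => p + q * x) '' K) (p + q * u) (q * ℓ) =
      (fun x => p + q * x) '' leftTargets K u ℓ := by
  have hf := strictMono_affine (p := p) hq
  have hinf := sInf_image_affine_of_pos (p := p) hq h.1 h.bddBelow
  ext y
  constructor
  · rintro ⟨hyu, ⟨v, hg, hl⟩ | rfl⟩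
    · obtain ⟨b, -, rfl⟩ := hg.2.2.1
      obtain ⟨a, -, rfl⟩ := hg.2.1
      exact ⟨b, ⟨hf.lt_iff_lt.1 hyu, Or.inl ⟨a, (isGap_image_iff_of_strictMono hf).1 hg,
        le_of_mul_le_mul_left (by linarith) hq⟩⟩, rfl⟩
    · exact ⟨sInf K, ⟨hf.lt_iff_lt.1 (hinf ▸ hyu), Or.inr rfl⟩, hinf.symm⟩
  · rintro ⟨x, ⟨hxu, ⟨a, hg, hl⟩ | rfl⟩, rfl⟩
    · exact ⟨hf hxu, Or.inl ⟨_, (isGap_image_iff_of_strictMono hf).2 hg, by nlinarith⟩⟩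
    · exact ⟨hf hxu, Or.inr hinf.symm⟩

lemma rightTargets_image_affine_of_neg (h : IsCantorSet K) (hq : q < 0) :
    rightTargets ((fun x => p + q * x) '' K) (p + q * u) (-q * ℓ) =
      (fun x => p + q * x) '' leftTargets K u ℓ := by
  have hf := strictAnti_affine (p := p) hq
  have hsup := sSup_image_affine_of_neg (p := p) hq h.1 h.bddBelow
  ext y
  constructor
  · rintro ⟨huy, ⟨v, hg, hl⟩ | rfl⟩
    · obtain ⟨b, -, rfl⟩ := hg.2.1
      obtain ⟨a, -, rfl⟩ := hg.2.2.1
      exact ⟨b, ⟨hf.lt_iff_gt.1 huy, Or.inl ⟨a, (isGap_image_iff_of_strictAnti hf).1 hg,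
        le_of_mul_le_mul_left (by linarith) (neg_pos.2 hq)⟩⟩, rfl⟩
    · exact ⟨sInf K, ⟨hf.lt_iff_gt.1 (hsup ▸ huy), Or.inr rfl⟩, hsup.symm⟩
  · rintro ⟨x, ⟨hxu, ⟨a, hg, hl⟩ | rfl⟩, rfl⟩
    · exact ⟨hf hxu, Or.inl ⟨_, (isGap_image_iff_of_strictAnti hf).2 hg, by nlinarith⟩⟩
    · exact ⟨hf hxu, Or.inr hsup.symm⟩

lemma leftTargets_image_affine_of_neg (h : IsCantorSet K) (hq : q < 0) :
    leftTargets ((fun x => p + q * x) '' K) (p + q * u) (-q * ℓ) =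
      (fun x => p + q * x) '' rightTargets K u ℓ := by
  have hf := strictAnti_affine (p := p) hq
  have hinf := sInf_image_affine_of_neg (p := p) hq h.1 h.bddAbove
  ext y
  constructor
  · rintro ⟨hyu, ⟨v, hg, hl⟩ | rfl⟩
    · obtain ⟨a, -, rfl⟩ := hg.2.2.1
      obtain ⟨b, -, rfl⟩ := hg.2.1
      exact ⟨a, ⟨hf.lt_iff_gt.1 hyu, Or.inl ⟨b, (isGap_image_iff_of_strictAnti hf).1 hg,
        le_of_mul_le_mul_left (by linarith) (neg_pos.2 hq)⟩⟩, rfl⟩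
    · exact ⟨sSup K, ⟨hf.lt_iff_gt.1 (hinf ▸ hyu), Or.inr rfl⟩, hinf.symm⟩
  · rintro ⟨x, ⟨hux, ⟨b, hg, hl⟩ | rfl⟩, rfl⟩
    · exact ⟨hf hux, Or.inl ⟨_, (isGap_image_iff_of_strictAnti hf).2 hg, by nlinarith⟩⟩
    · exact ⟨hf hux, Or.inr hinf.symm⟩

lemma thicknessValues_subset_image_affine (h : IsCantorSet K) (hq : q ≠ 0) :
    thicknessValues K ⊆ thicknessValues ((fun x => p + q * x) '' K) := by
  rintro r ⟨a, b, hg, hr⟩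
  have hR : (rightTargets K b (b - a)).Nonempty := ⟨_, h.sSup_mem_rightTargets hg⟩
  have hL : (leftTargets K a (b - a)).Nonempty := ⟨_, h.sInf_mem_leftTargets hg⟩
  have hba : b - a ≠ 0 := sub_ne_zero.2 hg.1.ne'
  rcases hq.lt_or_gt with hq | hq <;> rcases hr with rfl | rfl
  · refine ⟨_, _, (isGap_image_iff_of_strictAnti (strictAnti_affine hq)).2 hg, Or.inr ?_⟩
    rw [show p + q * a - (p + q * b) = -q * (b - a) by ring, leftTargets_image_affine_of_neg h hq,
      sSup_image_affine_of_neg hq hR rightTargets_bddBelow]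
    field_simp
    ring
  · refine ⟨_, _, (isGap_image_iff_of_strictAnti (strictAnti_affine hq)).2 hg, Or.inl ?_⟩
    rw [show p + q * a - (p + q * b) = -q * (b - a) by ring, rightTargets_image_affine_of_neg h hq,
      sInf_image_affine_of_neg hq hL leftTargets_bddAbove]
    field_simp
    ring
  · refine ⟨_, _, (isGap_image_iff_of_strictMono (strictMono_affine hq)).2 hg, Or.inl ?_⟩
    rw [show p + q * b - (p + q * a) = q * (b - a) by ring, rightTargets_image_affine_of_pos h hq,
      sInf_image_affine_of_pos hq hR rightTargets_bddBelow]
    field_simp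
    ring
  · refine ⟨_, _, (isGap_image_iff_of_strictMono (strictMono_affine hq)).2 hg, Or.inr ?_⟩
    rw [show p + q * b - (p + q * a) = q * (b - a) by ring, leftTargets_image_affine_of_pos h hq,
      sSup_image_affine_of_pos hq hL leftTargets_bddAbove]
    field_simp
    ring

lemma IsCantorSet.image_homeomorph (h : IsCantorSet K) (e : ℝ ≃ₜ ℝ) :
    IsCantorSet (e '' K) := by
  refine ⟨h.1.image e, h.2.1.image e.continuous, ⟨e.isClosedMap _ h.2.2.1.closed, ?_⟩,
    e.isEmbedding.isTotallyDisconnected_image.2 h.2.2.2⟩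
  rintro _ ⟨x, hx, rfl⟩
  simpa using (h.2.2.1.acc x hx).map e.continuous.continuousAt e.injective

lemma IsCantorSet.image_affine (h : IsCantorSet K) (hq : q ≠ 0) :
    IsCantorSet ((fun x => p + q * x) '' K) :=
  h.image_homeomorph ((Homeomorph.mulLeft₀ q hq).trans (Homeomorph.addLeft p))

lemma IsCantorSet.thickness_image_affine (h : IsCantorSet K) (hq : q ≠ 0) :
    thickness ((fun x => p + q * x) '' K) = thickness K := by
  have hinv : (fun x => -p / q + q⁻¹ * x) '' ((fun x => p + q * x) '' K) = K := by
    rw [image_image]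
    refine (image_congr fun x _ => ?_).trans (image_id K)
    field_simp
    simp
  have hsub := thicknessValues_subset_image_affine (p := -p / q)
    (h.image_affine (p := p) hq) (inv_ne_zero hq)
  rw [hinv] at hsub
  rw [thickness, thickness, (thicknessValues_subset_image_affine h hq).antisymm hsub]

lemma IsCantorSet.exists_hull_image_affine (h : IsCantorSet K) (hq : q ≠ 0) :
    ∃ c, ∀ p, sInf ((fun x => p + q * x) '' K) = p + c ∧
      sSup ((fun x => p + q * x) '' K) = p + c + |q| * (sSup K - sInf K) := by
  rcases hq.lt_or_gt with hq | hq
  · refine ⟨q * sSup K, fun p => ⟨sInf_image_affine_of_neg hq h.1 h.bddAbove, ?_⟩⟩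
    rw [sSup_image_affine_of_neg hq h.1 h.bddBelow, abs_of_neg hq]
    ring
  · refine ⟨q * sInf K, fun p => ⟨sInf_image_affine_of_pos hq h.1 h.bddBelow, ?_⟩⟩
    rw [sSup_image_affine_of_pos hq h.1 h.bddAbove, abs_of_pos hq]
    ring

end Affine

/-- pinned dot product sets contain long intervals. -/
theorem pinned_dot_interval (K1 K2 : Set ℝ) (h1 : IsCantorSet K1) (h2 : IsCantorSet K2)
    (hτ : 1 ≤ thickness K1 * thickness K2) (ℓ : ℝ)
    (hl1 : sSup K1 - sInf K1 = ℓ) (hl2 : sSup K2 - sInf K2 = ℓ)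
    (x₁ x₂ : ℝ) (hx₁ : x₁ ≠ 0) (hx₂ : x₂ ≠ 0) :
    ∃ a b : ℝ, ℓ * min |x₁| |x₂| ≤ b - a ∧
      Set.Ioo a b ⊆ {t : ℝ | ∃ y₁ ∈ K1, ∃ y₂ ∈ K2, x₁ * y₁ + x₂ * y₂ = t} := by
  have hℓ : 0 < ℓ := hl2 ▸ sub_pos.2 h2.sInf_lt_sSup
  obtain ⟨c₁, hA⟩ := h1.exists_hull_image_affine (neg_ne_zero.2 hx₁)
  obtain ⟨c₂, hB⟩ := h2.exists_hull_image_affine hx₂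
  simp only [abs_neg, hl1] at hA
  simp only [hl2] at hB
  set L₁ := |x₁| * ℓ
  set L₂ := |x₂| * ℓ
  have hm₁ : ℓ * min |x₁| |x₂| ≤ L₁ := by nlinarith [min_le_left |x₁| |x₂|]
  have hm₂ : ℓ * min |x₁| |x₂| ≤ L₂ := by nlinarith [min_le_right |x₁| |x₂|]
  refine ⟨max c₂ (c₂ + L₂ - L₁) - c₁, c₂ + L₂ - c₁, ?_, fun t ⟨ht₁, ht₂⟩ => ?_⟩
  · linarith [max_le (a := c₂) (b := c₂ + L₂ - L₁) (c := c₂ + L₂ - ℓ * min |x₁| |x₂|)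
      (by linarith) (by linarith)]
  obtain ⟨ht₁, ht₁'⟩ := max_lt_iff.1 (sub_lt_iff_lt_add.1 ht₁)
  have hlink : Linked ((fun y => t + -x₁ * y) '' K1) ((fun y => 0 + x₂ * y) '' K2) := by
    obtain ⟨hA₁, hA₂⟩ := hA t
    obtain ⟨hB₁, hB₂⟩ := hB 0
    exact linked_of_lt (by linarith) (by linarith) (by linarith)
  have hτ' := (h1.thickness_image_affine (p := t) (neg_ne_zero.2 hx₁)).symm ▸
    (h2.thickness_image_affine (p := 0) hx₂).symm ▸ hτ
  obtain ⟨z, ⟨y₁, hy₁, rfl⟩, ⟨y₂, hy₂, hz⟩⟩ :=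
    (h1.image_affine (neg_ne_zero.2 hx₁)).inter_nonempty_of_linked (h2.image_affine hx₂) hτ' hlink
  exact ⟨y₁, hy₁, y₂, hy₂, by linarith⟩
end

section
/- For any finite tree T on vertices {1,...,k+1}, the set Δ_T(C_{1/3} × C_{1/3}) = { (|x^i − x^j|)_{i∼j} : x^1,...,x^{k+1} ∈ C_{1/3} × C_{1/3}, x^i ≠ x^j } ⊂ ℝ^k has non-empty interior, where C_{1/3} is the standard middle thirds Cantor set. -/
open Set

/-!
Let `C` be the middle-thirds Cantor set. The *pinwheel* `P ⊆ C × C` is the union of the four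
cells `(c + C × C) / 81` with `c = (0, 54), (54, 78), (78, 24), (24, 0)`; the quarter turn about
`(79/162, 79/162)` permutes them cyclically. From every point of `P`, every distance `d` with
`591 ≤ 810 d ≤ 593` is attained at another point of `P`: reducing to the first cell by the
quarter turn, one looks in the next cell (or the previous one), and the squared distances to
that cell are the values `(a + s)² + (b + u)²`, `s, u ∈ C`, which fill an interval because the
two summands have slopes within a factor `3` of each other, the tolerance of a Cantor set of
thickness `1`.
Given edge lengths in that range, placing the vertices of the tree one by one along the paths
from a root realizes them, so the open box of such length vectors lies in the distance set.
-/

theorem cantorThirds_eq_cantorSet : cantorThirds = cantorSet := by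
  refine iInter_congr fun n => ?_
  induction n with
  | zero => rfl
  | succ n ih =>
    rw [Function.iterate_succ_apply', ih, preCantorSet_succ]
    congr 2
    funext x
    ring

theorem one_sub_mem_preCantorSet {x : ℝ} {n : ℕ} (hx : x ∈ preCantorSet n) :
    1 - x ∈ preCantorSet n := by
  induction n generalizing x with
  | zero => exact ⟨by linarith [hx.2], by linarith [hx.1]⟩
  | succ n ih =>
    rcases hx with ⟨y, hy, rfl⟩ | ⟨y, hy, rfl⟩
    · exact Or.inr ⟨1 - y, ih hy, by ring⟩
    · exact Or.inl ⟨1 - y, ih hy, by ring⟩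

theorem one_sub_mem_cantorSet {x : ℝ} (hx : x ∈ cantorSet) : 1 - x ∈ cantorSet :=
  mem_iInter.mpr fun n => one_sub_mem_preCantorSet (mem_iInter.mp hx n)

theorem div_three_mem_cantorSet {x : ℝ} (hx : x ∈ cantorSet) : x / 3 ∈ cantorSet := by
  rw [cantorSet_eq_union_halves]
  exact Or.inl ⟨x, hx, rfl⟩

theorem two_add_div_three_mem_cantorSet {x : ℝ} (hx : x ∈ cantorSet) :
    (2 + x) / 3 ∈ cantorSet := by
  rw [cantorSet_eq_union_halves]
  exact Or.inr ⟨x, hx, rfl⟩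

theorem add_div_three_mem_preCantorSet_succ {a x : ℝ} {n : ℕ} (ha : a = 0 ∨ a = 2)
    (hx : x ∈ preCantorSet n) : (a + x) / 3 ∈ preCantorSet (n + 1) := by
  rcases ha with rfl | rfl
  · exact Or.inl ⟨x, hx, by ring⟩
  · exact Or.inr ⟨x, hx, rfl⟩

def SlopeBounds (f : ℝ → ℝ) (m M : ℝ) : Prop :=
  ∀ x y, 0 ≤ x → x ≤ y → y ≤ 1 → m * (y - x) ≤ f y - f x ∧ f y - f x ≤ M * (y - x)

theorem SlopeBounds.comp_add_div_three {f : ℝ → ℝ} {m M a : ℝ} (h : SlopeBounds f m M)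
    (ha : a = 0 ∨ a = 2) : SlopeBounds (fun x => f ((a + x) / 3)) (m / 3) (M / 3) := by
  intro x y hx hxy hy
  have ha' : 0 ≤ a ∧ a ≤ 2 := by rcases ha with rfl | rfl <;> norm_num
  have := h ((a + x) / 3) ((a + y) / 3) (by linarith) (by linarith) (by linarith)
  constructor <;> linarith

theorem slopeBounds_add_sq (c : ℝ) :
    SlopeBounds (fun s => (c + s) ^ 2) (2 * c) (2 * c + 2) := by
  intro x y hx hxy hy
  constructor <;> nlinarith

theorem exists_preCantorSet_add_eq (n : ℕ) {f g : ℝ → ℝ} {m₁ M₁ m₂ M₂ v : ℝ}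
    (hf : Continuous f) (hg : Continuous g) (hfs : SlopeBounds f m₁ M₁)
    (hgs : SlopeBounds g m₂ M₂) (h₂₁ : M₂ ≤ m₁) (h₁₂ : M₁ ≤ 3 * m₂)
    (hv : v ∈ Icc (f 0 + g 0) (f 1 + g 1)) :
    ∃ s ∈ preCantorSet n, ∃ u ∈ preCantorSet n, f s + g u = v := by
  induction n generalizing f g m₁ M₁ m₂ M₂ with
  | zero =>
    rcases le_total v (f 1 + g 0) with h | h
    · obtain ⟨s, hs, hsv⟩ := intermediate_value_Icc zero_le_one
        (hf.add continuous_const).continuousOn ⟨hv.1, h⟩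
      exact ⟨s, hs, 0, left_mem_Icc.mpr zero_le_one, hsv⟩
    · obtain ⟨u, hu, huv⟩ := intermediate_value_Icc zero_le_one
        (continuous_const.add hg).continuousOn ⟨h, hv.2⟩
      exact ⟨1, right_mem_Icc.mpr zero_le_one, u, hu, huv⟩
  | succ n ih =>
    have step (a b : ℝ) (ha : a = 0 ∨ a = 2) (hb : b = 0 ∨ b = 2)
        (h₀ : f (a / 3) + g (b / 3) ≤ v) (h₁ : v ≤ f ((a + 1) / 3) + g ((b + 1) / 3)) :
        ∃ s ∈ preCantorSet (n + 1), ∃ u ∈ preCantorSet (n + 1), f s + g u = v := by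
      obtain ⟨s, hs, u, hu, hsu⟩ := ih (by fun_prop) (by fun_prop)
        (hfs.comp_add_div_three ha) (hgs.comp_add_div_three hb) (by linarith) (by linarith)
        ⟨by simpa using h₀, by simpa using h₁⟩
      exact ⟨_, add_div_three_mem_preCantorSet_succ ha hs,
        _, add_div_three_mem_preCantorSet_succ hb hu, hsu⟩
    have hf₁ := hfs 0 (1 / 3) le_rfl (by norm_num) (by norm_num)
    have hf₂ := hfs (1 / 3) (2 / 3) (by norm_num) (by norm_num) (by norm_num)
    have hf₃ := hfs (2 / 3) 1 (by norm_num) (by norm_num) (by norm_num)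
    have hg₂ := hgs (1 / 3) (2 / 3) (by norm_num) (by norm_num) (by norm_num)
    have hg₃ := hgs 0 1 le_rfl zero_le_one le_rfl
    -- by `h₂₁` and `h₁₂`, consecutive ones of the four ranges below overlap
    rcases le_or_gt v (f (1 / 3) + g (1 / 3)) with h₁ | h₁
    · exact step 0 0 (.inl rfl) (.inl rfl) (by simpa using hv.1) (by simpa using h₁)
    rcases le_or_gt v (f (1 / 3) + g 1) with h₂ | h₂
    · exact step 0 2 (.inl rfl) (.inr rfl) (by norm_num; linarith) (by norm_num; linarith)
    rcases le_or_gt v (f 1 + g (1 / 3)) with h₃ | h₃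
    · exact step 2 0 (.inr rfl) (.inl rfl) (by norm_num; linarith) (by norm_num; linarith)
    · exact step 2 2 (.inr rfl) (.inr rfl) (by norm_num; linarith)
        (by norm_num; linarith [hv.2])

theorem exists_cantorSet_add_eq {f g : ℝ → ℝ} {m₁ M₁ m₂ M₂ v : ℝ}
    (hf : Continuous f) (hg : Continuous g) (hfs : SlopeBounds f m₁ M₁)
    (hgs : SlopeBounds g m₂ M₂) (h₂₁ : M₂ ≤ m₁) (h₁₂ : M₁ ≤ 3 * m₂)
    (hv : v ∈ Icc (f 0 + g 0) (f 1 + g 1)) :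
    ∃ s ∈ cantorSet, ∃ u ∈ cantorSet, f s + g u = v := by
  let K (n : ℕ) : Set (ℝ × ℝ) :=
    preCantorSet n ×ˢ preCantorSet n ∩ {p | f p.1 + g p.2 = v}
  have hclosed (n : ℕ) : IsClosed (K n) :=
    ((isClosed_preCantorSet n).prod (isClosed_preCantorSet n)).inter
      (isClosed_eq (by fun_prop) continuous_const)
  have hK₀ : IsCompact (K 0) :=
    (isCompact_Icc.prod isCompact_Icc).inter_right (isClosed_eq (by fun_prop) continuous_const)
  have hanti (n : ℕ) : K (n + 1) ⊆ K n :=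
    inter_subset_inter_left _ <| prod_mono (preCantorSet_antitone n.le_succ)
      (preCantorSet_antitone n.le_succ)
  have hne (n : ℕ) : (K n).Nonempty := by
    obtain ⟨s, hs, u, hu, hsu⟩ := exists_preCantorSet_add_eq n hf hg hfs hgs h₂₁ h₁₂ hv
    exact ⟨(s, u), ⟨hs, hu⟩, hsu⟩
  obtain ⟨p, hp⟩ :=
    IsCompact.nonempty_iInter_of_sequence_nonempty_isCompact_isClosed K hanti hne hK₀ hclosed
  simp only [mem_iInter] at hp
  exact ⟨p.1, mem_iInter.mpr fun n => (hp n).1.1, p.2, mem_iInter.mpr fun n => (hp n).1.2,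
    (hp 0).2⟩

theorem exists_cantorSet_sq_add_sq_eq {σ τ T : ℝ} (hσ : σ ∈ Icc (0 : ℝ) 1)
    (hτ : τ ∈ Icc (0 : ℝ) 1) (hστ : 55 * σ + 25 * τ ≤ 63) (hT : T ∈ Icc (3492 : ℝ) 3524) :
    ∃ s ∈ cantorSet, ∃ u ∈ cantorSet, (54 - σ + s) ^ 2 + (24 - τ + u) ^ 2 = T := by
  obtain ⟨hσ₀, hσ₁⟩ := hσ
  obtain ⟨hτ₀, hτ₁⟩ := hτ
  refine exists_cantorSet_add_eq (by fun_prop) (by fun_prop) (slopeBounds_add_sq _)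
    (slopeBounds_add_sq _) (by linarith) (by linarith) ⟨?_, ?_⟩
  · nlinarith [hT.1]
  · -- `(55 - σ) ^ 2 + (25 - τ) ^ 2 ≥ 3650 - 2 * (55 * σ + 25 * τ) ≥ 3524`
    nlinarith [hT.2]

namespace SimpleGraph

theorem IsTree.exists_forall_dart {V α : Type*} {G : SimpleGraph V} (hG : G.IsTree)
    {P : Set α} (hP : P.Nonempty) {E : G.Dart → α → α → Prop}
    (hE : ∀ d a b, E d a b → E d.symm b a) (hext : ∀ d, ∀ a ∈ P, ∃ b ∈ P, E d a b) :
    ∃ x : V → α, (∀ v, x v ∈ P) ∧ ∀ d : G.Dart, E d (x d.fst) (x d.snd) := by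
  classical
  choose! next hnextP hnextE using hext
  obtain ⟨a₀, ha₀⟩ := hP
  obtain ⟨r⟩ := hG.connected.nonempty
  let path (v : V) : G.Path r v := (hG.connected r v).some.toPath
  let x (v : V) : α := (path v).1.darts.foldl (fun a d => next d a) a₀
  have hxP (v : V) : x v ∈ P := by
    suffices ∀ (l : List G.Dart) a, a ∈ P → l.foldl (fun a d => next d a) a ∈ P from
      this _ _ ha₀
    intro l
    induction l with
    | nil => exact fun _ ha => ha
    | cons d l ih => exact fun a ha => ih _ (hnextP d a ha)
  have hforward (d : G.Dart) (hd : d.fst ∈ (path d.snd).1.support) :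
      E d (x d.fst) (x d.snd) := by
    obtain ⟨⟨i, j⟩, h⟩ := d
    have hconcat := hG.isAcyclic.path_concat (path i).2 (path j).2 h hd
    have hstep : x j = next ⟨(i, j), h⟩ (x i) := by
      simp only [x, hconcat, Walk.darts_concat, List.concat_eq_append, List.foldl_append,
        List.foldl_cons, List.foldl_nil]
    exact hstep ▸ hnextE _ _ (hxP i)
  refine ⟨x, hxP, fun d => ?_⟩
  by_cases hd : d.fst ∈ (path d.snd).1.support
  · exact hforward d hd
  · have hd' := hG.isAcyclic.mem_support_of_ne_mem_support_of_adj_of_isPath (path d.fst).2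
      (path d.snd).2 d.adj hd
    simpa using hE _ _ _ (hforward d.symm hd')

end SimpleGraph

noncomputable def planeDist (p q : ℝ × ℝ) : ℝ := √((p.1 - q.1) ^ 2 + (p.2 - q.2) ^ 2)

theorem planeDist_comm (p q : ℝ × ℝ) : planeDist p q = planeDist q p := by
  unfold planeDist
  ring_nf

theorem planeDist_self (p : ℝ × ℝ) : planeDist p p = 0 := by
  simp [planeDist]

theorem planeDist_eq_of_sq_eq {p q : ℝ × ℝ} {d : ℝ} (hd : 0 ≤ d)
    (h : (p.1 - q.1) ^ 2 + (p.2 - q.2) ^ 2 = d ^ 2) : planeDist p q = d := by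
  rw [planeDist, h, Real.sqrt_sq hd]

noncomputable def quarterTurn (p : ℝ × ℝ) : ℝ × ℝ := (p.2, 79 / 81 - p.1)

theorem planeDist_quarterTurn_iterate (k : ℕ) (p q : ℝ × ℝ) :
    planeDist (quarterTurn^[k] p) (quarterTurn^[k] q) = planeDist p q := by
  induction k with
  | zero => rfl
  | succ k ih =>
    rw [Function.iterate_succ_apply', Function.iterate_succ_apply', ← ih]
    unfold planeDist quarterTurn
    ring_nf

def pinwheelCell : Set (ℝ × ℝ) :=
  {p | ∃ s ∈ cantorSet, ∃ u ∈ cantorSet, p = (s / 81, (54 + u) / 81)}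

def pinwheel : Set (ℝ × ℝ) := ⋃ k : ℕ, quarterTurn^[k] '' pinwheelCell

theorem pinwheelCell_subset_pinwheel : pinwheelCell ⊆ pinwheel :=
  fun p hp => mem_iUnion.mpr ⟨0, p, hp, rfl⟩

theorem pinwheel_nonempty : pinwheel.Nonempty :=
  ⟨_, pinwheelCell_subset_pinwheel ⟨0, zero_mem_cantorSet, 0, zero_mem_cantorSet, rfl⟩⟩

theorem iterate_quarterTurn_mem_pinwheel {p : ℝ × ℝ} (hp : p ∈ pinwheel) (k : ℕ) :
    quarterTurn^[k] p ∈ pinwheel := by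
  obtain ⟨j, q, hq, rfl⟩ := mem_iUnion.mp hp
  exact mem_iUnion.mpr ⟨k + j, q, hq, Function.iterate_add_apply _ _ _ _⟩

theorem add_div_81_mem_cantorSet {c s : ℝ} (hc : c = 0 ∨ c = 24 ∨ c = 54 ∨ c = 78)
    (hs : s ∈ cantorSet) : (c + s) / 81 ∈ cantorSet := by
  have L := @div_three_mem_cantorSet
  have R := @two_add_div_three_mem_cantorSet
  rcases hc with rfl | rfl | rfl | rfl
  · convert L (L (L (L hs))) using 1; ring
  · convert L (R (R (L hs))) using 1; ring
  · convert R (L (L (L hs))) using 1; ring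
  · convert R (R (R (L hs))) using 1; ring

theorem pinwheel_subset : pinwheel ⊆ cantorSet ×ˢ cantorSet := by
  let T : Set ℝ := {x | x ∈ cantorSet ∧ 79 / 81 - x ∈ cantorSet}
  have hturn : MapsTo quarterTurn (T ×ˢ T) (T ×ˢ T) :=
    fun p hp => ⟨hp.2, hp.1.2, by simpa [quarterTurn] using hp.1.1⟩
  have hbase : pinwheelCell ⊆ T ×ˢ T := by
    rintro _ ⟨s, hs, u, hu, rfl⟩
    refine ⟨⟨?_, ?_⟩, ?_, ?_⟩
    · simpa using add_div_81_mem_cantorSet (c := 0) (by norm_num) hs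
    · convert add_div_81_mem_cantorSet (c := 78) (by norm_num)
        (one_sub_mem_cantorSet hs) using 1
      ring
    · exact add_div_81_mem_cantorSet (c := 54) (by norm_num) hu
    · convert add_div_81_mem_cantorSet (c := 24) (by norm_num)
        (one_sub_mem_cantorSet hu) using 1
      ring
  intro p hp
  obtain ⟨k, q, hq, rfl⟩ := mem_iUnion.mp hp
  exact prod_mono (fun _ hx => hx.1) (fun _ hx => hx.1) (hturn.iterate k (hbase hq))

theorem exists_planeDist_eq_of_mem_pinwheelCell {p : ℝ × ℝ} (hp : p ∈ pinwheelCell) {d : ℝ}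
    (hd : d ∈ Icc (591 / 810 : ℝ) (593 / 810)) : ∃ q ∈ pinwheel, planeDist p q = d := by
  obtain ⟨σ, hσ, τ, hτ, rfl⟩ := hp
  have hσ' := cantorSet_subset_unitInterval hσ
  have hτ' := cantorSet_subset_unitInterval hτ
  have hd₀ : 0 ≤ d := by linarith [hd.1]
  have hT : 6561 * d ^ 2 ∈ Icc (3492 : ℝ) 3524 := ⟨by nlinarith [hd.1], by nlinarith [hd.2]⟩
  -- near the far corner of its cell, `p` is too close to the next cell: use the previous one
  rcases le_or_gt (55 * σ + 25 * τ) 63 with h | h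
  · obtain ⟨s, hs, u, hu, hsu⟩ := exists_cantorSet_sq_add_sq_eq hσ' hτ' h hT
    refine ⟨((54 + s) / 81, (78 + u) / 81), mem_iUnion.mpr ⟨1, ((1 - u) / 81, (54 + s) / 81),
      ⟨1 - u, one_sub_mem_cantorSet hu, s, hs, rfl⟩, ?_⟩, planeDist_eq_of_sq_eq hd₀ ?_⟩
    · simp only [Function.iterate_one, quarterTurn]
      ring_nf
    · linear_combination hsu / 6561
  · obtain ⟨s, hs, u, hu, hsu⟩ := exists_cantorSet_sq_add_sq_eq (σ := 1 - τ) (τ := σ)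
      ⟨by linarith [hτ'.2], by linarith [hτ'.1]⟩ hσ' (by linarith [hσ'.2]) hT
    refine ⟨((24 + u) / 81, (1 - s) / 81),
      mem_iUnion.mpr ⟨3, ((1 - s) / 81, (54 + (1 - u)) / 81),
        ⟨1 - s, one_sub_mem_cantorSet hs, 1 - u, one_sub_mem_cantorSet hu, rfl⟩, ?_⟩,
      planeDist_eq_of_sq_eq hd₀ ?_⟩
    · simp only [Function.iterate_succ, Function.iterate_zero, Function.comp_apply, id,
        quarterTurn]
      ring_nf
    · linear_combination hsu / 6561

theorem exists_planeDist_eq {p : ℝ × ℝ} (hp : p ∈ pinwheel) {d : ℝ}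
    (hd : d ∈ Icc (591 / 810 : ℝ) (593 / 810)) : ∃ q ∈ pinwheel, planeDist p q = d := by
  obtain ⟨k, p₀, hp₀, rfl⟩ := mem_iUnion.mp hp
  obtain ⟨q, hq, hpq⟩ := exists_planeDist_eq_of_mem_pinwheelCell hp₀ hd
  exact ⟨quarterTurn^[k] q, iterate_quarterTurn_mem_pinwheel hq k,
    (planeDist_quarterTurn_iterate k p₀ q).trans hpq⟩

/-- interior of tree distance sets for the middle-thirds Cantor set. -/
theorem tree_distance_interior_middle_thirds
    (k : ℕ) (G : SimpleGraph (Fin (k + 1))) (hT : G.IsTree) :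
    (interior {f : G.edgeSet → ℝ |
      ∃ x : Fin (k + 1) → ℝ × ℝ, (∀ i, x i ∈ cantorThirds ×ˢ cantorThirds) ∧
        (∀ i j, G.Adj i j → x i ≠ x j) ∧
        ∀ i j, (h : G.Adj i j) →
          f ⟨s(i, j), G.mem_edgeSet.mpr h⟩ =
            Real.sqrt (((x i).1 - (x j).1) ^ 2 + ((x i).2 - (x j).2) ^ 2)}).Nonempty := by
  rw [cantorThirds_eq_cantorSet]
  let D : Set ℝ := Ioo (591 / 810) (593 / 810)
  refine ⟨fun _ => 592 / 810, mem_interior.mpr ⟨pi univ fun _ => D, ?_,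
    isOpen_set_pi finite_univ fun _ _ => isOpen_Ioo, fun _ _ => by norm_num [D]⟩⟩
  intro f hf
  have hfD (e : G.edgeSet) : f e ∈ D := hf e (mem_univ e)
  obtain ⟨x, hxP, hx⟩ := hT.exists_forall_dart pinwheel_nonempty
    (E := fun d a b => planeDist a b = f ⟨d.edge, d.edge_mem⟩)
    (fun d a b h => by simpa only [planeDist_comm, SimpleGraph.Dart.edge_symm] using h)
    (fun d a ha => exists_planeDist_eq ha (Ioo_subset_Icc_self (hfD _)))
  have hedge (i j) (h : G.Adj i j) :
      planeDist (x i) (x j) = f ⟨s(i, j), G.mem_edgeSet.mpr h⟩ := hx ⟨(i, j), h⟩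
  refine ⟨x, fun i => pinwheel_subset (hxP i), fun i j h hij => ?_,
    fun i j h => (hedge i j h).symm⟩
  have hzero := hedge i j h
  rw [hij, planeDist_self] at hzero
  linarith [(hfD ⟨s(i, j), G.mem_edgeSet.mpr h⟩).1]
end

section
/- There exists, for every k ≥ 1, a sequence of points x^1, ..., x^{k+1} in C_{1/3} × C_{1/3} such that x^{i+1} ∈ W_{x^i} for all i, where W_x = { y ∈ ℝ² : (y_2 − x_2) < (y_1 − x_1) < 3(y_2 − x_2) }; moreover each x^{i+1} can be taken to be the lower left corner of a scaled copy of C_{1/3} × C_{1/3} contained in W_{x^i}. In particular, wedge membership is transitive: x³ ∈ W_{x²} and x² ∈ W_{x¹} imply x³ ∈ W_{x¹}. -/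
open Set

def cfAux (S : Set ℝ) : Set ℝ := (fun x : ℝ => x / 3) '' S ∪ (fun x : ℝ => x / 3 + 2/3) '' S

lemma cantor_eq : cantorThirds = ⋂ n : ℕ, cfAux^[n] (Set.Icc 0 1) := rfl

lemma cfAux_mono : Monotone cfAux := fun _ _ h =>
  Set.union_subset_union (Set.image_mono h) (Set.image_mono h)

lemma cfAux_Icc : cfAux (Set.Icc 0 1) ⊆ Set.Icc 0 1 := by
  rintro x (⟨y, ⟨h0, h1⟩, rfl⟩ | ⟨y, ⟨h0, h1⟩, rfl⟩) <;> constructor <;> simp <;> linarith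

lemma cantor_subset_Icc : cantorThirds ⊆ Set.Icc 0 1 := by
  intro x hx
  simpa using Set.mem_iInter.mp hx 0

lemma mem_g0 {s : ℝ} (hs : s ∈ cantorThirds) : s / 3 ∈ cantorThirds := by
  rw [cantor_eq, Set.mem_iInter] at *
  intro n
  have h1 : s / 3 ∈ cfAux^[n+1] (Set.Icc 0 1) := by
    rw [Function.iterate_succ_apply']
    exact Or.inl ⟨s, hs n, rfl⟩
  have h2 : cfAux^[n+1] (Set.Icc 0 1) ⊆ cfAux^[n] (Set.Icc 0 1) := by
    rw [Function.iterate_succ_apply]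
    exact (cfAux_mono.iterate n) cfAux_Icc
  exact h2 h1

lemma mem_g2 {s : ℝ} (hs : s ∈ cantorThirds) : s / 3 + 2/3 ∈ cantorThirds := by
  rw [cantor_eq, Set.mem_iInter] at *
  intro n
  have h1 : s / 3 + 2/3 ∈ cfAux^[n+1] (Set.Icc 0 1) := by
    rw [Function.iterate_succ_apply']
    exact Or.inr ⟨s, hs n, rfl⟩
  have h2 : cfAux^[n+1] (Set.Icc 0 1) ⊆ cfAux^[n] (Set.Icc 0 1) := by
    rw [Function.iterate_succ_apply]
    exact (cfAux_mono.iterate n) cfAux_Icc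
  exact h2 h1

lemma aa_mem (j : ℕ) : ∀ c ∈ cantorThirds, (1 - (1/9:ℝ)^j) + c * (1/9)^j ∈ cantorThirds := by
  induction j with
  | zero => intro c hc; simpa using hc
  | succ j ih =>
    intro c hc
    have h := mem_g2 (mem_g2 (ih c hc))
    convert h using 1
    ring

lemma bb_mem (j : ℕ) : ∀ c ∈ cantorThirds,
    (3/4 - (3/4) * (1/9:ℝ)^j) + c * (1/9)^j ∈ cantorThirds := by
  induction j with
  | zero => intro c hc; simpa using hc
  | succ j ih =>
    intro c hc
    have h := mem_g2 (mem_g0 (ih c hc))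
    convert h using 1
    ring

/-- a skeleton in `C_{1/3} × C_{1/3}` with successive points in wedges,
each a lower-left corner of a scaled copy of `C_{1/3} × C_{1/3}` inside the previous wedge;
and wedge membership is transitive. -/
theorem cantor_wedge_skeleton (k : ℕ) (hk : 1 ≤ k) :
    (∃ x : Fin (k + 1) → ℝ × ℝ,
      (∀ i, x i ∈ cantorThirds ×ˢ cantorThirds) ∧
      (∀ i : Fin k, x i.succ ∈ Wedge (x i.castSucc)) ∧
      (∀ i : Fin k, ∃ n : ℕ,
        (fun p : ℝ × ℝ => ((x i.succ).1 + p.1 / 3 ^ n, (x i.succ).2 + p.2 / 3 ^ n)) ''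
            (cantorThirds ×ˢ cantorThirds) ⊆
          (cantorThirds ×ˢ cantorThirds) ∩ Wedge (x i.castSucc))) ∧
    ∀ a b c : ℝ × ℝ, c ∈ Wedge b → b ∈ Wedge a → c ∈ Wedge a := by
  constructor
  · refine ⟨fun i => (1 - (1/9:ℝ)^(i:ℕ), 3/4 - (3/4)*(1/9:ℝ)^(i:ℕ)), ?_, ?_, ?_⟩
    · intro i
      have h0 : (0:ℝ) ∈ cantorThirds := by
        rw [cantor_eq, Set.mem_iInter]
        intro n
        induction n with
        | zero => simp
        | succ n ih =>
          rw [Function.iterate_succ_apply']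
          exact Or.inl ⟨0, ih, by norm_num⟩
      constructor
      · simpa using aa_mem (i:ℕ) 0 h0
      · simpa using bb_mem (i:ℕ) 0 h0
    · intro i
      have hq : (0:ℝ) < (1/9:ℝ)^(i:ℕ) := by positivity
      simp only [Wedge, Set.mem_setOf_eq, Fin.val_succ, Fin.coe_castSucc, pow_succ]
      constructor <;> nlinarith [hq]
    · intro i
      refine ⟨2*((i:ℕ)+1), ?_⟩
      rintro _ ⟨p, ⟨hp1, hp2⟩, rfl⟩
      have hq : (0:ℝ) < (1/9:ℝ)^(i:ℕ) := by positivity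
      have hb1 := cantor_subset_Icc hp1
      have hb2 := cantor_subset_Icc hp2
      simp only [Set.mem_Icc] at hb1 hb2
      have h3 : ∀ t : ℝ, t / (3:ℝ)^(2*((i:ℕ)+1)) = t * (1/9)^((i:ℕ)+1) := by
        intro t
        rw [pow_mul, div_pow, one_pow]
        norm_num
        rw [div_eq_mul_inv]
      constructor
      · constructor
        · simp only [Fin.val_succ, h3]
          exact aa_mem ((i:ℕ)+1) p.1 hp1
        · simp only [Fin.val_succ, h3]
          exact bb_mem ((i:ℕ)+1) p.2 hp2
      · simp only [Wedge, Set.mem_setOf_eq, Fin.val_succ, Fin.coe_castSucc, h3, pow_succ]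
        constructor
        · nlinarith [mul_pos hq (show (0:ℝ) < 2 + p.1 - p.2 by linarith)]
        · nlinarith [mul_pos hq (show (0:ℝ) < 10 + 3*p.2 - p.1 by linarith)]
  · intro a b c hcb hba
    simp only [Wedge, Set.mem_setOf_eq] at *
    exact ⟨by linarith [hcb.1, hba.1], by linarith [hcb.2, hba.2]⟩
end
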